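/- arXiv:2206.00031 — 5 statements merged into one kernel-verified Lean document; each statement's English description precedes it below -/
import Mathlib

section
/- If a completely regular code with intersection array {β_0,...,β_{ρ-1}; γ_1,...,γ_ρ} exists in a Hamming graph H(n,q), then for all i ∈ {1,...,ρ} and j ∈ {0,...,ρ-i}, the product β_j·β_{j+1}···β_{j+i-1} is divisible by i!, and likewise γ_{j+1}·γ_{j+2}···γ_{j+i} is divisible by i!. -/
open SimpleGraph

/-- The Hamming graph `H(n, α)`: vertices are `n`-tuples over `α`, adjacent iff
Hamming distance `1`. -/
def hammingGraph (n : ℕ) (α : Type*) [DecidableEq α] : SimpleGraph (Fin n → α) where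
  Adj x y := hammingDist x y = 1
  symm := by constructor; intro x y h; rwa [hammingDist_comm]
  loopless := by constructor; intro x h; simp [hammingDist_self] at h

/-- Distance from a vertex to a set of vertices. -/
noncomputable def distTo {V : Type*} (Γ : SimpleGraph V) (C : Set V) (v : V) : ℕ :=
  sInf (Γ.dist v '' C)

/-- `C` is a completely regular code of covering radius `ρ` with intersection array
`{β 0, …, β (ρ-1); γ 1, …, γ ρ}`: the distance partition of `C` is equitable with the
corresponding tridiagonal quotient matrix. -/
def IsCompletelyRegular {V : Type*} (Γ : SimpleGraph V) (C : Set V) (ρ : ℕ)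
    (β γ : ℕ → ℕ) : Prop :=
  C.Nonempty ∧
  (∀ v, distTo Γ C v ≤ ρ) ∧
  (∃ v, distTo Γ C v = ρ) ∧
  (∀ v t, distTo Γ C v = t → t < ρ →
    {u | Γ.Adj v u ∧ distTo Γ C u = t + 1}.ncard = β t) ∧
  (∀ v t, distTo Γ C v = t → 0 < t →
    {u | Γ.Adj v u ∧ distTo Γ C u = t - 1}.ncard = γ t)

/-- `Γ` is a distance-regular graph of diameter `D` with intersection numbers
`b 0, …, b (D-1)` and `c 1, …, c D`. -/
def IsDistanceRegular {V : Type*} (Γ : SimpleGraph V) (D : ℕ) (b c : ℕ → ℕ) : Prop :=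
  Γ.Connected ∧
  (∀ u v, Γ.dist u v ≤ D) ∧
  (∃ u v, Γ.dist u v = D) ∧
  (∀ u v i, Γ.dist u v = i → i < D →
    {w | Γ.Adj v w ∧ Γ.dist u w = i + 1}.ncard = b i) ∧
  (∀ u v i, Γ.dist u v = i → 0 < i →
    {w | Γ.Adj v w ∧ Γ.dist u w = i - 1}.ncard = c i)

/-!
Fix `v₀` with `d(v₀, C) = j` and let `S k` be the set of vertices `u` at Hamming distance `k`
from `v₀` with `d(u, C) = j + k`. As `d(·, C)` is `1`-Lipschitz, each `u ∈ S k` has exactly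
`β (j + k)` neighbours in `S (k + 1)`, and each `w ∈ S (k + 1)` has exactly `k + 1` neighbours
in `S k`: its `c_{k+1} = k + 1` neighbours closer to `v₀`. Double counting these edges gives
`(k + 1) |S (k + 1)| = β (j + k) |S k|`, so `β j ⋯ β (j + k - 1) = k! |S k|`.
The `γ`'s are treated in the same way with `d(·, C)` replaced by `-d(·, C)`.
-/

open Finset

section Walk

variable {V : Type*} {Γ : SimpleGraph V}

theorem SimpleGraph.Walk.le_add_length {g : V → ℤ} (hg : ∀ u v, Γ.Adj u v → g v ≤ g u + 1)
    {x y : V} (w : Γ.Walk x y) : g y ≤ g x + w.length := by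
  induction w with
  | nil => simp
  | cons h p ih =>
    rw [Walk.length_cons]
    have := hg _ _ h
    push_cast
    linarith

theorem SimpleGraph.Walk.exists_apply_eq {f : V → ℕ} (hf : ∀ u v, Γ.Adj u v → f u ≤ f v + 1)
    {a b : V} (w : Γ.Walk a b) {t : ℕ} (hb : f b ≤ t) (ha : t ≤ f a) : ∃ u, f u = t := by
  induction w with
  | nil => exact ⟨_, le_antisymm hb ha⟩
  | @cons a a' b h p ih =>
    by_cases hat : f a = t
    · exact ⟨a, hat⟩
    · exact ih hb (by have := hf _ _ h; omega)

end Walk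

section DistTo

variable {V : Type*} {Γ : SimpleGraph V} {C : Set V}

theorem distTo_le_dist {c : V} (hc : c ∈ C) (v : V) : distTo Γ C v ≤ Γ.dist v c :=
  Nat.sInf_le ⟨c, hc, rfl⟩

theorem distTo_eq_zero_of_mem {c : V} (hc : c ∈ C) : distTo Γ C c = 0 :=
  Nat.eq_zero_of_le_zero <| (distTo_le_dist hc c).trans_eq Γ.dist_self

theorem exists_mem_dist_eq_distTo (hC : C.Nonempty) (v : V) :
    ∃ c ∈ C, Γ.dist v c = distTo Γ C v :=
  Nat.sInf_mem (hC.image (Γ.dist v))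

theorem distTo_le_distTo_add_one_of_adj {u v : V} (h : Γ.Adj u v) :
    distTo Γ C v ≤ distTo Γ C u + 1 := by
  rcases C.eq_empty_or_nonempty with rfl | hC
  · simp [distTo]
  obtain ⟨c, hc, hcu⟩ := exists_mem_dist_eq_distTo hC u
  have := h.diff_dist_adj (u := c)
  calc distTo Γ C v ≤ Γ.dist v c := distTo_le_dist hc v
    _ ≤ Γ.dist u c + 1 := by rw [dist_comm, dist_comm (u := u)]; omega
    _ = distTo Γ C u + 1 := by rw [hcu]

theorem IsCompletelyRegular.exists_distTo_eq {ρ : ℕ} {β γ : ℕ → ℕ}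
    (hC : IsCompletelyRegular Γ C ρ β γ) {t : ℕ} (ht : t ≤ ρ) : ∃ v, distTo Γ C v = t := by
  obtain ⟨hne, -, ⟨v, hv⟩, -, -⟩ := hC
  obtain ⟨c, hc, hvc⟩ := exists_mem_dist_eq_distTo (Γ := Γ) hne v
  rcases Nat.eq_zero_or_pos ρ with rfl | hρ
  · exact ⟨v, by omega⟩
  obtain ⟨w, -⟩ := exists_walk_of_dist_ne_zero (show Γ.dist v c ≠ 0 by omega)
  exact w.exists_apply_eq (fun _ _ h => distTo_le_distTo_add_one_of_adj h.symm)
    (by rw [distTo_eq_zero_of_mem hc]; omega) (by omega)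

end DistTo

section Hamming

variable {ι : Type*} [Fintype ι] [DecidableEq ι] {β : ι → Type*} [∀ i, DecidableEq (β i)]

theorem hammingDist_update_add (x y : ∀ i, β i) (m : ι) (a : β m) :
    hammingDist x (Function.update y m a) + (if x m ≠ y m then 1 else 0) =
      hammingDist x y + (if x m ≠ a then 1 else 0) := by
  have hrest : ∑ i ∈ univ.erase m, (if x i ≠ Function.update y m a i then 1 else 0) =
      ∑ i ∈ univ.erase m, (if x i ≠ y i then 1 else 0) :=
    sum_congr rfl fun i hi => by rw [Function.update_of_ne (ne_of_mem_erase hi)]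
  simp only [hammingDist, card_filter]
  rw [← add_sum_erase _ _ (mem_univ m), ← add_sum_erase _ _ (mem_univ m), hrest,
    Function.update_self]
  omega

theorem hammingDist_eq_one_iff {x y : ∀ i, β i} :
    hammingDist x y = 1 ↔ ∃ m, x m ≠ y m ∧ y = Function.update x m (y m) := by
  constructor
  · intro h
    obtain ⟨m, hm⟩ := card_eq_one.1 h
    have hdiff : ∀ i, x i ≠ y i ↔ i = m := by simpa [Finset.ext_iff] using hm
    refine ⟨m, (hdiff m).2 rfl, funext fun i => ?_⟩
    rcases eq_or_ne i m with rfl | hi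
    · simp
    · rw [Function.update_of_ne hi]
      exact (not_not.1 (mt (hdiff i).1 hi)).symm
  · rintro ⟨m, hm, hy⟩
    have := hammingDist_update_add x x m (y m)
    rw [← hy, hammingDist_self] at this
    simpa [hm] using this

end Hamming

section HammingGraph

variable {n : ℕ} {α : Type*} [DecidableEq α]

theorem hammingGraph_exists_walk_length_eq (x y : Fin n → α) :
    ∃ w : (hammingGraph n α).Walk x y, w.length = hammingDist x y := by
  induction hd : hammingDist x y generalizing x with
  | zero =>
    obtain rfl := hammingDist_eq_zero.1 hd
    exact ⟨.nil, rfl⟩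
  | succ d ih =>
    have hxy : x ≠ y := hammingDist_pos.1 (by omega)
    obtain ⟨m, hm⟩ := Function.ne_iff.1 hxy
    have hstep : (hammingGraph n α).Adj x (Function.update x m (y m)) :=
      hammingDist_eq_one_iff.2 ⟨m, by simpa using hm, by simp⟩
    have hrest := hammingDist_update_add y x m (y m)
    rw [hammingDist_comm y x, hd] at hrest
    obtain ⟨w, hw⟩ := ih (Function.update x m (y m))
      (by rw [hammingDist_comm]; simpa [Ne.symm hm] using hrest)
    exact ⟨.cons hstep w, by rw [Walk.length_cons, hw]⟩

theorem le_add_hammingDist {g : (Fin n → α) → ℤ}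
    (hg : ∀ u v, (hammingGraph n α).Adj u v → g v ≤ g u + 1) (x y : Fin n → α) :
    g y ≤ g x + hammingDist x y := by
  obtain ⟨w, hw⟩ := hammingGraph_exists_walk_length_eq x y
  exact hw ▸ w.le_add_length hg

instance : DecidableRel (hammingGraph n α).Adj :=
  fun x y => inferInstanceAs (Decidable (hammingDist x y = 1))

variable [Fintype α]

/-- The neighbours of `y` one step closer to `x` are the `update y m (x m)` with `x m ≠ y m`. -/
theorem card_filter_adj_hammingDist_eq {x y : Fin n → α} {d : ℕ} (h : hammingDist x y = d + 1) :
    #{w | (hammingGraph n α).Adj y w ∧ hammingDist x w = d} = d + 1 := by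
  have hinj : Set.InjOn (fun m => Function.update y m (x m))
      (univ.filter fun i => x i ≠ y i : Finset (Fin n)) := by
    intro m hm m' _ hmm'
    by_contra hne
    have := congrFun hmm' m
    simp only [Function.update_self, Function.update_of_ne hne] at this
    exact (mem_filter.1 (mem_coe.1 hm)).2 this
  rw [← h, hammingDist, ← card_image_of_injOn hinj]
  congr 1
  ext w
  simp only [mem_filter, mem_univ, true_and, mem_image]
  constructor
  · rintro ⟨hadj, hw⟩
    obtain ⟨m, hym, hwm⟩ := hammingDist_eq_one_iff.1 hadj
    have key := hammingDist_update_add x y m (w m)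
    rw [← hwm, hw, h] at key
    by_cases hxy : x m = y m
    · simp only [hxy, ne_eq, not_true_eq_false, if_false] at key
      omega
    · by_cases hxw : x m = w m
      · exact ⟨m, hxy, by rw [hxw, ← hwm]⟩
      · simp [hxy, hxw] at key
  · rintro ⟨m, hm, rfl⟩
    have hm : x m ≠ y m := hm
    refine ⟨hammingDist_eq_one_iff.2 ⟨m, by simpa using hm.symm, by simp⟩, ?_⟩
    have key := hammingDist_update_add x y m (x m)
    simp only [hm, ne_eq, not_false_eq_true, if_true, not_true_eq_false, if_false, h] at key
    omega

end HammingGraph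

section RisingSphere

variable {n : ℕ} {α : Type*} [DecidableEq α] [Fintype α] {g : (Fin n → α) → ℤ}
  {v₀ : Fin n → α}

/-- For `g` that is `1`-Lipschitz for the Hamming distance, the vertices at distance `k`
from `v₀` where this bound is attained. -/
def risingSphere (g : (Fin n → α) → ℤ) (v₀ : Fin n → α) (k : ℕ) : Finset (Fin n → α) :=
  {u | hammingDist v₀ u = k ∧ g u = g v₀ + k}

theorem risingSphere_zero : risingSphere g v₀ 0 = {v₀} := by
  ext u
  simp only [risingSphere, mem_filter, mem_univ, true_and, hammingDist_eq_zero, Nat.cast_zero,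
    add_zero, mem_singleton]
  constructor
  · rintro ⟨rfl, -⟩
    rfl
  · rintro rfl
    exact ⟨rfl, rfl⟩

theorem card_risingSphere_succ_mul (hg : ∀ x y, g y ≤ g x + hammingDist x y) {k b : ℕ}
    (hb : ∀ u ∈ risingSphere g v₀ k,
      {w | (hammingGraph n α).Adj u w ∧ g w = g u + 1}.ncard = b) :
    #(risingSphere g v₀ (k + 1)) * (k + 1) = #(risingSphere g v₀ k) * b := by
  refine (card_mul_eq_card_mul (hammingGraph n α).Adj (fun u hu => ?_) fun w hw => ?_).symm
  · rw [← hb u hu, ← Set.ncard_coe_finset]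
    congr 1
    ext w
    simp only [bipartiteAbove, risingSphere, coe_filter, mem_filter, mem_univ, true_and] at hu ⊢
    have hup := hg v₀ w
    constructor
    · rintro ⟨⟨-, hw⟩, hadj⟩
      exact ⟨hadj, by push_cast at hw; omega⟩
    · rintro ⟨hadj, hw⟩
      have hle : hammingDist v₀ w ≤ k + 1 :=
        hu.1 ▸ (hadj : hammingDist u w = 1) ▸ hammingDist_triangle v₀ u w
      exact ⟨⟨by omega, by push_cast; omega⟩, hadj⟩
  · simp only [risingSphere, mem_filter, mem_univ, true_and] at hw
    rw [← card_filter_adj_hammingDist_eq hw.1]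
    congr 1
    ext u
    simp only [bipartiteBelow, risingSphere, mem_filter, mem_univ, true_and]
    constructor
    · rintro ⟨⟨hu, -⟩, hadj⟩
      exact ⟨hadj.symm, hu⟩
    · rintro ⟨hadj, hu⟩
      have hup := hg v₀ u
      have hdown := hg u w
      rw [hu] at hup
      rw [show hammingDist u w = 1 from hadj.symm] at hdown
      exact ⟨⟨hu, by push_cast at hw ⊢; omega⟩, hadj.symm⟩

theorem prod_eq_factorial_mul_card_risingSphere (hg : ∀ x y, g y ≤ g x + hammingDist x y)
    {b : ℕ → ℕ} {k : ℕ} (hb : ∀ l < k, ∀ u ∈ risingSphere g v₀ l,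
      {w | (hammingGraph n α).Adj u w ∧ g w = g u + 1}.ncard = b l) :
    ∏ l ∈ range k, b l = k.factorial * #(risingSphere g v₀ k) := by
  induction k with
  | zero => simp [risingSphere_zero]
  | succ k ih =>
    rw [prod_range_succ, ih fun l hl => hb l (by omega), Nat.factorial_succ, mul_assoc,
      ← card_risingSphere_succ_mul hg (hb k k.lt_succ_self)]
    ring

end RisingSphere

theorem distTo_le_distTo_add_hammingDist {n : ℕ} {α : Type*} [DecidableEq α]
    (C : Set (Fin n → α)) (x y : Fin n → α) :
    (distTo (hammingGraph n α) C y : ℤ) ≤ distTo (hammingGraph n α) C x + hammingDist x y :=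
  le_add_hammingDist (g := fun v => (distTo (hammingGraph n α) C v : ℤ))
    (fun _ _ h => by exact_mod_cast distTo_le_distTo_add_one_of_adj h) x y

namespace IsCompletelyRegular

variable {n : ℕ} {α : Type*} [DecidableEq α] [Fintype α] {C : Set (Fin n → α)} {ρ : ℕ}
  {β γ : ℕ → ℕ}

theorem factorial_dvd_prod_beta (hC : IsCompletelyRegular (hammingGraph n α) C ρ β γ)
    {i j : ℕ} (hij : i + j ≤ ρ) : i.factorial ∣ ∏ l ∈ range i, β (j + l) := by
  obtain ⟨v₀, hv₀⟩ := hC.exists_distTo_eq (show j ≤ ρ by omega)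
  refine Dvd.intro _ (prod_eq_factorial_mul_card_risingSphere (v₀ := v₀)
    (b := fun l => β (j + l)) (distTo_le_distTo_add_hammingDist C) fun l hl u hu => ?_).symm
  have hu : distTo (hammingGraph n α) C u = j + l := by
    simp only [risingSphere, mem_filter, mem_univ, true_and] at hu
    omega
  rw [← hC.2.2.2.1 u (j + l) hu (by omega)]
  congr 1
  ext w
  exact and_congr_right fun _ => by omega

theorem factorial_dvd_prod_gamma (hC : IsCompletelyRegular (hammingGraph n α) C ρ β γ)
    {i j : ℕ} (hij : i + j ≤ ρ) : i.factorial ∣ ∏ l ∈ range i, γ (j + l + 1) := by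
  obtain ⟨v₀, hv₀⟩ := hC.exists_distTo_eq hij
  have hreflect : ∏ l ∈ range i, γ (i + j - l) = ∏ l ∈ range i, γ (j + l + 1) := by
    rw [← prod_range_reflect]
    exact prod_congr rfl fun l hl => by rw [mem_range] at hl; congr 1; omega
  have hg (x y : Fin n → α) :
      -(distTo (hammingGraph n α) C y : ℤ) ≤ -distTo (hammingGraph n α) C x + hammingDist x y := by
    have := distTo_le_distTo_add_hammingDist C y x
    rw [hammingDist_comm] at this
    omega
  rw [← hreflect]
  refine Dvd.intro _ (prod_eq_factorial_mul_card_risingSphere (v₀ := v₀)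
    (b := fun l => γ (i + j - l)) hg fun l hl u hu => ?_).symm
  have hu : distTo (hammingGraph n α) C u = i + j - l := by
    simp only [risingSphere, mem_filter, mem_univ, true_and] at hu
    omega
  rw [← hC.2.2.2.2 u (i + j - l) hu (by omega)]
  congr 1
  ext w
  exact and_congr_right fun _ => by omega

end IsCompletelyRegular

theorem crc_hamming_factorial_dvd_general (n q : ℕ) (C : Set (Fin n → Fin q)) (ρ : ℕ)
    (β γ : ℕ → ℕ)
    (hC : IsCompletelyRegular (hammingGraph n (Fin q)) C ρ β γ)
    (i j : ℕ) (hij : i + j ≤ ρ) :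
    (Nat.factorial i ∣ ∏ l ∈ Finset.range i, β (j + l)) ∧
    (Nat.factorial i ∣ ∏ l ∈ Finset.range i, γ (j + l + 1)) :=
  ⟨hC.factorial_dvd_prod_beta hij, hC.factorial_dvd_prod_gamma hij⟩

/-- If a completely regular code with intersection array `{β 0,…,β (ρ-1); γ 1,…,γ ρ}`
exists in a Hamming graph `H(n,q)`, then for all `1 ≤ i` and `j` with `i + j ≤ ρ`,
the product `β j · β (j+1) ⋯ β (j+i-1)` is divisible by `i!`, and likewise
`γ (j+1) · γ (j+2) ⋯ γ (j+i)` is divisible by `i!`. -/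
theorem crc_hamming_factorial_dvd (n q : ℕ) (C : Set (Fin n → Fin q)) (ρ : ℕ)
    (β γ : ℕ → ℕ)
    (hC : IsCompletelyRegular (hammingGraph n (Fin q)) C ρ β γ)
    (i j : ℕ) (hi : 1 ≤ i) (hij : i + j ≤ ρ) :
    (Nat.factorial i ∣ ∏ l ∈ Finset.range i, β (j + l)) ∧
    (Nat.factorial i ∣ ∏ l ∈ Finset.range i, γ (j + l + 1)) :=
  crc_hamming_factorial_dvd_general n q C ρ β γ hC i j hij
end

section
/- Let q be an odd prime power with q > 4. Then there is no 3-dimensional linear code over F_q of length 7 all of whose nonzero codewords have Hamming weight 4, 6, or 7. -/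
set_option linter.unusedSectionVars false
set_option maxHeartbeats 1000000

namespace NC737
variable {F : Type*} [Field F] [DecidableEq F]

def dp (x y : Fin 3 → F) : F := x 0 * y 0 + x 1 * y 1 + x 2 * y 2
def cr (x y : Fin 3 → F) : Fin 3 → F :=
  ![x 1 * y 2 - x 2 * y 1, x 2 * y 0 - x 0 * y 2, x 0 * y 1 - x 1 * y 0]
def D (x y z : Fin 3 → F) : F := dp (cr x y) z

lemma dp_def (x y : Fin 3 → F) :
    dp x y = x 0 * y 0 + x 1 * y 1 + x 2 * y 2 := rfl
lemma dp_comm (x y : Fin 3 → F) : dp x y = dp y x := by simp [dp]; ring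
lemma dp_zero_right (m : Fin 3 → F) : dp m 0 = 0 := by simp [dp]
lemma dp_smul_right (m x : Fin 3 → F) (t : F) : dp m (t • x) = t * dp m x := by
  simp [dp]; ring
lemma cr_smul_self (x : Fin 3 → F) (t : F) : cr x (t • x) = 0 := by
  funext i; fin_cases i <;> simp [cr] <;> ring
lemma cr_zero_left (y : Fin 3 → F) : cr 0 y = 0 := by
  funext i; fin_cases i <;> simp [cr]
lemma cr_anticomm (x y : Fin 3 → F) : cr y x = - cr x y := by
  funext i; fin_cases i <;> simp [cr] <;> ring
lemma D_xyx (x y : Fin 3 → F) : D x y x = 0 := by simp [D, dp, cr]; ring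
lemma D_xyy (x y : Fin 3 → F) : D x y y = 0 := by simp [D, dp, cr]; ring
lemma D_swap12 (x y z : Fin 3 → F) : D x y z = - D y x z := by simp [D, dp, cr]; ring
lemma D_cyc (x y z : Fin 3 → F) : D x y z = D y z x := by simp [D, dp, cr]; ring
lemma dp_cr_left (u w : Fin 3 → F) : dp (cr u w) u = 0 := by simp [dp, cr]; ring
lemma dp_cr_right (u w : Fin 3 → F) : dp (cr u w) w = 0 := by simp [dp, cr]; ring
lemma triple (m u w : Fin 3 → F) :
    cr m (cr u w) = dp m w • u - dp m u • w := by
  funext i; fin_cases i <;> simp [cr, dp] <;> ring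

def rot (x : Fin 3 → F) : Fin 3 → F := fun i => x (i + 1)
lemma rot_apply (x : Fin 3 → F) (i : Fin 3) : rot x i = x (i + 1) := rfl
lemma rot_zero : rot (0 : Fin 3 → F) = 0 := rfl
lemma cr_rot (u w : Fin 3 → F) : cr (rot u) (rot w) = rot (cr u w) := by
  funext i; fin_cases i <;> simp [cr, rot] <;> rfl
lemma dp_rot (x y : Fin 3 → F) : dp (rot x) (rot y) = dp x y := by
  show x 1 * y 1 + x 2 * y 2 + x 0 * y 0 = _
  simp [dp]; ring
lemma unrot {z u w : Fin 3 → F} {x y : F} (h : rot z = x • rot u + y • rot w) :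
    z = x • u + y • w := by
  funext i
  have := congrFun h (i - 1)
  simp only [rot_apply, sub_add_cancel, Pi.add_apply, Pi.smul_apply, smul_eq_mul] at this ⊢
  exact this
lemma unrot_smul {m c : Fin 3 → F} {t : F} (h : rot m = t • rot c) : m = t • c := by
  funext i
  have := congrFun h (i - 1)
  simp only [rot_apply, sub_add_cancel, Pi.smul_apply, smul_eq_mul] at this ⊢
  exact this

lemma funext3 {x y : Fin 3 → F} (h0 : x 0 = y 0) (h1 : x 1 = y 1) (h2 : x 2 = y 2) :
    x = y := by
  funext i; fin_cases i; exacts [h0, h1, h2]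

lemma exists_component {x : Fin 3 → F} (h : x ≠ 0) : ∃ i, x i ≠ 0 := by
  by_contra hc; push_neg at hc
  exact h (funext fun i => hc i)
lemma ne_zero_of_component {x : Fin 3 → F} (i : Fin 3) (h : x i ≠ 0) : x ≠ 0 := by
  intro hc; rw [hc] at h; exact h rfl

lemma prop_aux {m c : Fin 3 → F} (h : cr m c = 0) (hc : c 2 ≠ 0) :
    ∃ t : F, m = t • c := by
  have h0 := congrFun h 0
  have h1 := congrFun h 1
  simp [cr] at h0 h1
  refine ⟨m 2 / c 2, funext3 ?_ ?_ ?_⟩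
  · show m 0 = m 2 / c 2 * c 0
    field_simp; linear_combination -h1
  · show m 1 = m 2 / c 2 * c 1
    field_simp; linear_combination h0
  · show m 2 = m 2 / c 2 * c 2
    field_simp

/-- proportionality from vanishing cross product -/
lemma prop_of_cr {m c : Fin 3 → F} (h : cr m c = 0) (hc : c ≠ 0) :
    ∃ t : F, m = t • c := by
  obtain ⟨i, hi⟩ := exists_component hc
  fin_cases i
  · -- c 0 ≠ 0 : rotate once so it becomes component 2
    have hrc : cr (rot m) (rot c) = 0 := by rw [cr_rot, h, rot_zero]
    have h2 : (rot c) 2 ≠ 0 := hi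
    obtain ⟨t, ht⟩ := prop_aux hrc h2
    exact ⟨t, unrot_smul ht⟩
  · -- c 1 ≠ 0 : rotate twice
    have hrc : cr (rot (rot m)) (rot (rot c)) = 0 := by
      rw [cr_rot, cr_rot, h, rot_zero, rot_zero]
    have h2 : (rot (rot c)) 2 ≠ 0 := hi
    obtain ⟨t, ht⟩ := prop_aux hrc h2
    exact ⟨t, unrot_smul (unrot_smul ht)⟩
  · obtain ⟨t, ht⟩ := prop_aux h hi
    exact ⟨t, ht⟩

lemma LA_aux {u w z : Fin 3 → F} (hc : cr u w 2 ≠ 0) (hD : dp (cr u w) z = 0) :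
    ∃ x y : F, z = x • u + y • w := by
  have hc2 : u 0 * w 1 - u 1 * w 0 ≠ 0 := hc
  simp [dp, cr] at hD
  set x : F := (z 0 * w 1 - z 1 * w 0) / (u 0 * w 1 - u 1 * w 0) with hx
  set y : F := (u 0 * z 1 - u 1 * z 0) / (u 0 * w 1 - u 1 * w 0) with hy
  refine ⟨x, y, funext3 ?_ ?_ ?_⟩
  · show z 0 = x * u 0 + y * w 0
    rw [hx, hy, div_mul_eq_mul_div, div_mul_eq_mul_div, ← add_div, eq_div_iff hc2]; ring
  · show z 1 = x * u 1 + y * w 1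
    rw [hx, hy, div_mul_eq_mul_div, div_mul_eq_mul_div, ← add_div, eq_div_iff hc2]; ring
  · show z 2 = x * u 2 + y * w 2
    rw [hx, hy, div_mul_eq_mul_div, div_mul_eq_mul_div, ← add_div, eq_div_iff hc2]; linear_combination hD

/-- membership in the span of two vectors with nonzero cross product -/
lemma LA {u w z : Fin 3 → F} (hcr : cr u w ≠ 0) (hD : dp (cr u w) z = 0) :
    ∃ x y : F, z = x • u + y • w := by
  obtain ⟨i, hi⟩ := exists_component hcr
  fin_cases i
  · have h2 : cr (rot u) (rot w) 2 ≠ 0 := by rw [cr_rot]; exact hi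
    have hD' : dp (cr (rot u) (rot w)) (rot z) = 0 := by rw [cr_rot, dp_rot]; exact hD
    obtain ⟨x, y, h⟩ := LA_aux h2 hD'
    exact ⟨x, y, unrot h⟩
  · have h2 : cr (rot (rot u)) (rot (rot w)) 2 ≠ 0 := by rw [cr_rot, cr_rot]; exact hi
    have hD' : dp (cr (rot (rot u)) (rot (rot w))) (rot (rot z)) = 0 := by
      rw [cr_rot, cr_rot, dp_rot, dp_rot]; exact hD
    obtain ⟨x, y, h⟩ := LA_aux h2 hD'
    exact ⟨x, y, unrot (unrot h)⟩
  · exact LA_aux hi hD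

/-- perpendicular vectors to two vectors lie on the cross product line -/
lemma LB {m u w : Fin 3 → F} (hcr : cr u w ≠ 0) (h1 : dp m u = 0) (h2 : dp m w = 0) :
    ∃ t : F, m = t • cr u w := by
  apply prop_of_cr _ hcr
  rw [triple, h1, h2]; simp

/-- every vector has a nonzero perpendicular vector -/
lemma Lperp (u : Fin 3 → F) : ∃ m : Fin 3 → F, m ≠ 0 ∧ dp m u = 0 := by
  by_cases h0 : u 0 = 0
  · by_cases h1 : u 1 = 0
    · exact ⟨![1, 0, 0], ne_zero_of_component 0 (by norm_num),
        by simp [dp, h0, h1]⟩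
    · exact ⟨![0, u 2, -u 1], ne_zero_of_component 2 (by simpa using h1),
        by simp [dp]; ring⟩
  · exact ⟨![u 1, -u 0, 0], ne_zero_of_component 1 (by simpa using h0),
      by simp [dp]; ring⟩

/-- a common nonzero perpendicular to any two vectors -/
lemma LE (u w : Fin 3 → F) : ∃ m : Fin 3 → F, m ≠ 0 ∧ dp m u = 0 ∧ dp m w = 0 := by
  by_cases hcr : cr u w = 0
  · by_cases hu : u = 0
    · obtain ⟨m, hm, hmw⟩ := Lperp w
      exact ⟨m, hm, by rw [hu]; exact dp_zero_right m, hmw⟩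
    · have hwu : cr w u = 0 := by rw [cr_anticomm, hcr, neg_zero]
      obtain ⟨t, hw⟩ := prop_of_cr hwu hu
      obtain ⟨m, hm, hmu⟩ := Lperp u
      exact ⟨m, hm, hmu, by rw [hw, dp_smul_right, hmu, mul_zero]⟩
  · exact ⟨cr u w, hcr, dp_cr_left u w, dp_cr_right u w⟩


lemma dp_zero_left (m : Fin 3 → F) : dp 0 m = 0 := by simp [dp]

lemma rot_rot_rot (x : Fin 3 → F) : rot (rot (rot x)) = x := by
  funext i; fin_cases i <;> rfl
lemma rot_injective : Function.Injective (rot (F := F)) := by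
  intro x y h
  funext i
  have := congrFun h (i - 1)
  simpa [rot, sub_add_cancel] using this

open Finset

lemma LC1_aux {u : Fin 3 → F} [Fintype F] (hu : u 0 ≠ 0) :
    Fintype.card F ^ 2 ≤ (univ.filter fun m : Fin 3 → F => dp m u = 0).card := by
  classical
  have := Finset.card_le_card_of_injOn
    (f := fun p : F × F => (![-(p.1 * u 1 + p.2 * u 2) / u 0, p.1, p.2] : Fin 3 → F))
    (s := (univ : Finset (F × F)))
    (t := univ.filter fun m : Fin 3 → F => dp m u = 0)
    (by
      intro p _
      rw [Finset.mem_coe, mem_filter]; simp only [mem_univ, true_and, dp]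
      simp only [Matrix.cons_val_zero, Matrix.cons_val_one, Matrix.head_cons,
        Matrix.cons_val_two, Matrix.tail_cons]
      field_simp
      ring)
    (by
      intro p _ q _ h
      have h1 := congrFun h 1
      have h2 := congrFun h 2
      simp only [Matrix.cons_val_one, Matrix.head_cons, Matrix.cons_val_two,
        Matrix.tail_cons] at h1 h2
      exact Prod.ext h1 h2)
  simpa [sq, Fintype.card_prod] using this

lemma card_le_rot [Fintype F] (u : Fin 3 → F) :
    (univ.filter fun m : Fin 3 → F => dp m (rot u) = 0).card ≤
      (univ.filter fun m : Fin 3 → F => dp m u = 0).card := by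
  classical
  apply Finset.card_le_card_of_injOn (f := fun m => rot (rot m))
  · intro m hm
    simp only [coe_filter, Set.mem_setOf_eq, mem_filter, mem_univ, true_and] at hm ⊢
    calc dp (rot (rot m)) u = dp (rot (rot m)) (rot (rot (rot u))) := by rw [rot_rot_rot]
    _ = dp m (rot u) := by rw [dp_rot, dp_rot]
    _ = 0 := hm
  · intro a _ b _ h
    exact rot_injective (rot_injective h)

lemma LC1 [Fintype F] {u : Fin 3 → F} (hu : u ≠ 0) :
    Fintype.card F ^ 2 ≤ (univ.filter fun m : Fin 3 → F => dp m u = 0).card := by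
  by_cases h0 : u 0 ≠ 0
  · exact LC1_aux h0
  push_neg at h0
  by_cases h1 : u 1 ≠ 0
  · have : (rot u) 0 ≠ 0 := h1
    exact le_trans (LC1_aux this) (card_le_rot u)
  push_neg at h1
  have h2 : u 2 ≠ 0 := by
    intro h2; apply hu; funext i; fin_cases i <;> simpa
  have : (rot (rot u)) 0 ≠ 0 := h2
  exact le_trans (LC1_aux this) (le_trans (card_le_rot (rot u)) (card_le_rot u))

/-- the set of coordinates annihilated by the functional `m` -/
def Zset (v : Fin 7 → Fin 3 → F) (m : Fin 3 → F) : Finset (Fin 7) :=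
  univ.filter fun i => dp m (v i) = 0

section Core
variable [Fintype F] {v : Fin 7 → Fin 3 → F}

lemma core (hq : 4 < Fintype.card F)
    (hZ : ∀ m : Fin 3 → F, m ≠ 0 →
      (Zset v m).card = 0 ∨ (Zset v m).card = 1 ∨ (Zset v m).card = 3)
    {a j : Fin 7} (haj : a ≠ j)
    (hdom : ∀ m : Fin 3 → F, dp m (v j) = 0 → dp m (v a) = 0) : False := by
  classical
  by_cases hdeg : ∃ k, k ≠ a ∧ k ≠ j ∧ cr (v j) (v k) = 0
  · obtain ⟨k, hka, hkj, hcr⟩ := hdeg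
    -- find an index outside {a, j, k}
    have hex : ∃ l : Fin 7, l ∉ ({a, j, k} : Finset (Fin 7)) := by
      have hcmpl : (({a, j, k} : Finset (Fin 7))ᶜ).Nonempty := by
        rw [← Finset.card_pos, Finset.card_compl]
        have h3 : ({a, j, k} : Finset (Fin 7)).card ≤ 3 :=
          le_trans (card_insert_le _ _) (by
            have := card_insert_le j ({k} : Finset (Fin 7)); simp at this ⊢; omega)
        simp only [Fintype.card_fin]
        omega
      obtain ⟨l, hl⟩ := hcmpl
      exact ⟨l, (Finset.mem_compl.mp hl)⟩
    obtain ⟨l, hl⟩ := hex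
    simp only [Finset.mem_insert, Finset.mem_singleton, not_or] at hl
    obtain ⟨hla', hlj', hlk'⟩ := hl
    have hla : l ≠ a := hla'
    have hlj : l ≠ j := hlj'
    have hlk : l ≠ k := hlk'
    have hm : ∃ m : Fin 3 → F, m ≠ 0 ∧ dp m (v j) = 0 ∧ dp m (v k) = 0 ∧ dp m (v l) = 0 := by
      by_cases hvj : v j = 0
      · obtain ⟨m, hm0, h1, h2⟩ := LE (v k) (v l)
        exact ⟨m, hm0, by rw [hvj]; exact dp_zero_right m, h1, h2⟩
      · have hkj' : cr (v k) (v j) = 0 := by rw [cr_anticomm, hcr, neg_zero]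
        obtain ⟨t, hk⟩ := prop_of_cr hkj' hvj
        obtain ⟨m, hm0, h1, h2⟩ := LE (v j) (v l)
        exact ⟨m, hm0, h1, by rw [hk, dp_smul_right, h1, mul_zero], h2⟩
    obtain ⟨m, hm0, hj', hk', hl'⟩ := hm
    have ha' : dp m (v a) = 0 := hdom m hj'
    have hsub : ({a, j, k, l} : Finset (Fin 7)) ⊆ Zset v m := by
      intro x hx
      simp only [Finset.mem_insert, Finset.mem_singleton] at hx
      simp only [Zset, mem_filter, mem_univ, true_and]
      rcases hx with rfl | rfl | rfl | rfl
      exacts [ha', hj', hk', hl']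
    have hc4 : ({a, j, k, l} : Finset (Fin 7)).card = 4 := by
      rw [card_insert_of_notMem (by simp [haj, hka.symm, hla.symm]),
          card_insert_of_notMem (by simp [hkj.symm, hlj.symm]),
          card_insert_of_notMem (by simp [hlk.symm]), card_singleton]
    have h4 : 4 ≤ (Zset v m).card := hc4 ▸ card_le_card hsub
    rcases hZ m hm0 with h | h | h <;> omega
  · push_neg at hdeg
    have hvj : v j ≠ 0 := by
      intro h
      have hex : ∃ k : Fin 7, k ∉ ({a, j} : Finset (Fin 7)) := by
        have hcmpl : (({a, j} : Finset (Fin 7))ᶜ).Nonempty := by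
          rw [← Finset.card_pos, Finset.card_compl]
          have h2 : ({a, j} : Finset (Fin 7)).card ≤ 2 :=
            le_trans (card_insert_le _ _) (by simp)
          simp only [Fintype.card_fin]
          omega
        obtain ⟨k, hk⟩ := hcmpl
        exact ⟨k, Finset.mem_compl.mp hk⟩
      obtain ⟨k, hk⟩ := hex
      simp only [Finset.mem_insert, Finset.mem_singleton, not_or] at hk
      exact hdeg k hk.1 hk.2 (by rw [h, cr_zero_left])
    set q := Fintype.card F with hqdef
    set W := (univ.filter fun m : Fin 3 → F => dp m (v j) = 0) with hWdef
    have h0W : (0 : Fin 3 → F) ∈ W := by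
      simp [hWdef, dp_zero_left]
    set K := (((univ : Finset (Fin 7)).erase a).erase j) with hKdef
    have hjK : j ∈ (univ : Finset (Fin 7)).erase a := by
      exact Finset.mem_erase.mpr ⟨haj.symm, mem_univ j⟩
    have hKcard : K.card = 5 := by
      rw [hKdef, Finset.card_erase_of_mem hjK,
        Finset.card_erase_of_mem (mem_univ a)]
      simp
    have cover : W.erase 0 ⊆ K.biUnion
        (fun k => (((univ : Finset F).erase 0).image (fun t : F => t • cr (v j) (v k)))) := by
      intro m hm
      obtain ⟨hm0, hmW⟩ := Finset.mem_erase.mp hm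
      have hmj : dp m (v j) = 0 := (mem_filter.mp hmW).2
      have hma : dp m (v a) = 0 := hdom m hmj
      have hsub2 : ({a, j} : Finset (Fin 7)) ⊆ Zset v m := by
        intro x hx
        simp only [Finset.mem_insert, Finset.mem_singleton] at hx
        simp only [Zset, mem_filter, mem_univ, true_and]
        rcases hx with rfl | rfl
        exacts [hma, hmj]
      have h2le : 2 ≤ (Zset v m).card := by
        have hc2 : ({a, j} : Finset (Fin 7)).card = 2 := by
          rw [card_insert_of_notMem (by simp [haj]), card_singleton]
        exact hc2 ▸ card_le_card hsub2
      have hZ3 : (Zset v m).card = 3 := by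
        rcases hZ m hm0 with h | h | h <;> omega
      have hex : ∃ k ∈ Zset v m, k ∉ ({a, j} : Finset (Fin 7)) := by
        by_contra hc
        push_neg at hc
        have := card_le_card hc
        have hc2 : ({a, j} : Finset (Fin 7)).card = 2 := by
          rw [card_insert_of_notMem (by simp [haj]), card_singleton]
        omega
      obtain ⟨k, hkZ, hk⟩ := hex
      simp only [Finset.mem_insert, Finset.mem_singleton, not_or] at hk
      have hcrk := hdeg k hk.1 hk.2
      have hdk : dp m (v k) = 0 := by
        simpa [Zset] using hkZ
      obtain ⟨t, ht⟩ := LB hcrk hmj hdk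
      have ht0 : t ≠ 0 := by
        rintro rfl
        rw [zero_smul] at ht
        exact hm0 ht
      apply Finset.mem_biUnion.mpr
      refine ⟨k, ?_, ?_⟩
      · rw [hKdef]
        exact Finset.mem_erase.mpr ⟨hk.2, Finset.mem_erase.mpr ⟨hk.1, mem_univ k⟩⟩
      · exact Finset.mem_image.mpr ⟨t, Finset.mem_erase.mpr ⟨ht0, mem_univ t⟩, ht.symm⟩
    have hWlow : q ^ 2 ≤ W.card := LC1 hvj
    have hWcard : q ^ 2 - 1 ≤ (W.erase 0).card := by
      rw [Finset.card_erase_of_mem h0W]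
      omega
    have hup : (K.biUnion
        (fun k => (((univ : Finset F).erase 0).image (fun t : F => t • cr (v j) (v k))))).card
        ≤ 5 * (q - 1) := by
      apply le_trans (Finset.card_biUnion_le)
      have hbnd : ∀ k ∈ K,
          ((((univ : Finset F).erase 0).image (fun t : F => t • cr (v j) (v k)))).card
          ≤ q - 1 := by
        intro k _
        apply le_trans Finset.card_image_le
        rw [Finset.card_erase_of_mem (mem_univ (0 : F))]
        simp [hqdef]
      calc ∑ k ∈ K, ((((univ : Finset F).erase 0).image (fun t : F => t • cr (v j) (v k)))).card
          ≤ ∑ _k ∈ K, (q - 1) := Finset.sum_le_sum hbnd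
        _ = 5 * (q - 1) := by rw [Finset.sum_const, hKcard]; ring
    have hfin : q ^ 2 - 1 ≤ 5 * (q - 1) :=
      le_trans hWcard (le_trans (card_le_card cover) hup)
    have hq5 : 5 ≤ q := hq
    have hsq : q ^ 2 = q * q := sq q
    rw [hsq] at hfin
    have h2 : 5 * q ≤ q * q := Nat.mul_le_mul_right q hq5
    generalize q * q = Q at hfin h2
    omega

end Core

/-- collinearity of three of the seven points -/
abbrev coll (v : Fin 7 → Fin 3 → F) (i j k : Fin 7) : Prop := D (v i) (v j) (v k) = 0

lemma coll_swap12 {v : Fin 7 → Fin 3 → F} {i j k : Fin 7} (h : coll v i j k) :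
    coll v j i k := by
  unfold coll at h ⊢
  rw [D_swap12, neg_eq_zero] at h
  exact h

lemma coll_cyc {v : Fin 7 → Fin 3 → F} {i j k : Fin 7} (h : coll v i j k) :
    coll v j k i := by
  unfold coll at h ⊢
  rw [D_cyc] at h
  exact h

lemma coll_swap23 {v : Fin 7 → Fin 3 → F} {i j k : Fin 7} (h : coll v i j k) :
    coll v i k j := coll_cyc (coll_swap12 h)

lemma E0 (u w z : Fin 3 → F) (x y : F) : D u (x • u + y • w) z = y * D u w z := by
  simp [D, dp, cr]; ring

section Core2
variable [Fintype F] {v : Fin 7 → Fin 3 → F}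

lemma mainH1 (hq : 4 < Fintype.card F)
    (hZ : ∀ m : Fin 3 → F, m ≠ 0 →
      (Zset v m).card = 0 ∨ (Zset v m).card = 1 ∨ (Zset v m).card = 3) :
    ∀ i, v i ≠ 0 := by
  intro i hvi
  obtain ⟨j, hj⟩ := exists_ne i
  refine core hq hZ (a := i) (j := j) (Ne.symm hj) ?_
  intro m _
  rw [hvi]
  exact dp_zero_right m

lemma mainH2 (hq : 4 < Fintype.card F)
    (hZ : ∀ m : Fin 3 → F, m ≠ 0 →
      (Zset v m).card = 0 ∨ (Zset v m).card = 1 ∨ (Zset v m).card = 3) :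
    ∀ i j : Fin 7, i ≠ j → cr (v i) (v j) ≠ 0 := by
  intro i j hij hcr
  obtain ⟨t, ht⟩ := prop_of_cr hcr (mainH1 hq hZ j)
  refine core hq hZ (a := i) (j := j) hij ?_
  intro m hm
  rw [ht, dp_smul_right, hm, mul_zero]

lemma mainS3 (hq : 4 < Fintype.card F)
    (hZ : ∀ m : Fin 3 → F, m ≠ 0 →
      (Zset v m).card = 0 ∨ (Zset v m).card = 1 ∨ (Zset v m).card = 3) :
    ∀ i j : Fin 7, i ≠ j → (univ.filter fun k => coll v i j k).card = 3 := by
  intro i j hij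
  have hfz : (univ.filter fun k => coll v i j k) = Zset v (cr (v i) (v j)) := rfl
  rw [hfz]
  have hm0 := mainH2 hq hZ i j hij
  have hi : i ∈ Zset v (cr (v i) (v j)) := by
    simp only [Zset, mem_filter, mem_univ, true_and]
    exact dp_cr_left _ _
  have hj : j ∈ Zset v (cr (v i) (v j)) := by
    simp only [Zset, mem_filter, mem_univ, true_and]
    exact dp_cr_right _ _
  have h2le : 2 ≤ (Zset v (cr (v i) (v j))).card := by
    have hsub : ({i, j} : Finset (Fin 7)) ⊆ Zset v (cr (v i) (v j)) := by
      intro x hx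
      simp only [Finset.mem_insert, Finset.mem_singleton] at hx
      rcases hx with rfl | rfl
      exacts [hi, hj]
    have hc2 : ({i, j} : Finset (Fin 7)).card = 2 := by
      rw [card_insert_of_notMem (by simp [hij]), card_singleton]
    exact hc2 ▸ card_le_card hsub
  rcases hZ _ hm0 with h | h | h <;> omega

lemma third (hq : 4 < Fintype.card F)
    (hZ : ∀ m : Fin 3 → F, m ≠ 0 →
      (Zset v m).card = 0 ∨ (Zset v m).card = 1 ∨ (Zset v m).card = 3)
    {i j : Fin 7} (hij : i ≠ j) :
    ∃ k, k ≠ i ∧ k ≠ j ∧ coll v i j k ∧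
      ∀ l, coll v i j l → l = i ∨ l = j ∨ l = k := by
  classical
  set S := univ.filter fun k => coll v i j k with hSdef
  have hScard : S.card = 3 := mainS3 hq hZ i j hij
  have hiS : i ∈ S := by
    simp only [hSdef, mem_filter, mem_univ, true_and]
    exact D_xyx _ _
  have hjS : j ∈ S := by
    simp only [hSdef, mem_filter, mem_univ, true_and]
    exact D_xyy _ _
  have hjS' : j ∈ S.erase i := Finset.mem_erase.mpr ⟨Ne.symm hij, hjS⟩
  have hc1 : ((S.erase i).erase j).card = 1 := by
    rw [Finset.card_erase_of_mem hjS', Finset.card_erase_of_mem hiS, hScard]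
  obtain ⟨k, hk⟩ := Finset.card_eq_one.mp hc1
  have hkmem : k ∈ (S.erase i).erase j := by rw [hk]; exact Finset.mem_singleton_self k
  obtain ⟨hkj, hkmem'⟩ := Finset.mem_erase.mp hkmem
  obtain ⟨hki, hkS⟩ := Finset.mem_erase.mp hkmem'
  refine ⟨k, hki, hkj, ?_, ?_⟩
  · simpa [hSdef] using hkS
  · intro l hl
    by_cases hli : l = i
    · exact Or.inl hli
    by_cases hlj : l = j
    · exact Or.inr (Or.inl hlj)
    right; right
    have : l ∈ (S.erase i).erase j :=
      Finset.mem_erase.mpr ⟨hlj, Finset.mem_erase.mpr ⟨hli, by simpa [hSdef] using hl⟩⟩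
    rw [hk] at this
    exact Finset.mem_singleton.mp this

lemma four (hq : 4 < Fintype.card F)
    (hZ : ∀ m : Fin 3 → F, m ≠ 0 →
      (Zset v m).card = 0 ∨ (Zset v m).card = 1 ∨ (Zset v m).card = 3)
    {i j a b : Fin 7} (hij : i ≠ j) (hab : a ≠ b) (hai : a ≠ i) (haj : a ≠ j)
    (hbi : b ≠ i) (hbj : b ≠ j) (h1 : coll v i j a) (h2 : coll v i j b) : False := by
  classical
  have hsub : ({i, j, a, b} : Finset (Fin 7)) ⊆ univ.filter fun k => coll v i j k := by
    intro x hx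
    simp only [Finset.mem_insert, Finset.mem_singleton] at hx
    simp only [mem_filter, mem_univ, true_and]
    rcases hx with rfl | rfl | rfl | rfl
    exacts [D_xyx _ _, D_xyy _ _, h1, h2]
  have hc4 : ({i, j, a, b} : Finset (Fin 7)).card = 4 := by
    rw [card_insert_of_notMem (by simp [hij, hai.symm, hbi.symm]),
        card_insert_of_notMem (by simp [haj.symm, hbj.symm]),
        card_insert_of_notMem (by simp [hab]), card_singleton]
  have := card_le_card hsub
  rw [hc4, mainS3 hq hZ i j hij] at this
  omega

lemma exch (hq : 4 < Fintype.card F)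
    (hZ : ∀ m : Fin 3 → F, m ≠ 0 →
      (Zset v m).card = 0 ∨ (Zset v m).card = 1 ∨ (Zset v m).card = 3)
    {i j k : Fin 7} (hij : i ≠ j) (hik : i ≠ k)
    (h : coll v i j k) : ∀ l, coll v i j l → coll v i k l := by
  intro l hl
  obtain ⟨x, y, hk⟩ := LA (mainH2 hq hZ i j hij) h
  have hy : y ≠ 0 := by
    rintro rfl
    rw [zero_smul, add_zero] at hk
    have : cr (v i) (v k) = 0 := by rw [hk]; exact cr_smul_self _ _
    exact mainH2 hq hZ i k hik this
  unfold coll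
  rw [hk, E0]
  exact mul_eq_zero_of_right y hl

end Core2

lemma E1 (u w p : Fin 3 → F) (c d g a b h : F) :
    D u (c • w + d • p) (g • (a • u + b • w) + h • p) = (c * h - d * (g * b)) * D u w p := by
  simp [D, dp, cr]; ring

lemma E2 (u w p : Fin 3 → F) (e f g a b h : F) :
    D w (e • u + f • p) (g • (a • u + b • w) + h • p) = (f * (g * a) - e * h) * D u w p := by
  simp [D, dp, cr]; ring

lemma E3 (u w p : Fin 3 → F) (e f c d a b : F) :
    D (e • u + f • p) (c • w + d • p) (a • u + b • w)
      = -(e * (d * b) + f * (c * a)) * D u w p := by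
  simp [D, dp, cr]; ring

theorem mainFano [Fintype F] (v : Fin 7 → Fin 3 → F) (hq : 4 < Fintype.card F)
    (hodd : Odd (Fintype.card F))
    (hZ : ∀ m : Fin 3 → F, m ≠ 0 →
      (Zset v m).card = 0 ∨ (Zset v m).card = 1 ∨ (Zset v m).card = 3) : False := by
  classical
  have H2 := mainH2 hq hZ
  obtain ⟨A, B, hAB⟩ : ∃ A B : Fin 7, A ≠ B := ⟨0, 1, by decide⟩
  obtain ⟨Cc, hCA, hCB, cABC, uAB⟩ := third hq hZ hAB
  -- a point off the line A B
  obtain ⟨P, hABP⟩ : ∃ P : Fin 7, ¬ coll v A B P := by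
    by_contra hcon
    push_neg at hcon
    have : (univ.filter fun k => coll v A B k) = univ :=
      Finset.eq_univ_of_forall (fun k => by
        simp only [mem_filter, mem_univ, true_and]; exact hcon k)
    have h3 := mainS3 hq hZ A B hAB
    rw [this] at h3
    simp at h3
  have hPA : P ≠ A := by rintro rfl; exact hABP (D_xyx _ _)
  have hPB : P ≠ B := by rintro rfl; exact hABP (D_xyy _ _)
  have hPC : P ≠ Cc := by rintro rfl; exact hABP cABC
  obtain ⟨X, hXA, hXP, cAPX, uAP⟩ := third hq hZ (Ne.symm hPA)
  obtain ⟨Y, hYB, hYP, cBPY, uBP⟩ := third hq hZ (Ne.symm hPB)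
  obtain ⟨T, hTC, hTP, cCPT, uCP⟩ := third hq hZ (Ne.symm hPC)
  -- exchange maps along known lines
  have exchACB : ∀ l, coll v A Cc l → coll v A B l :=
    exch hq hZ (Ne.symm hCA) hAB (coll_swap23 cABC)
  have exchBCA : ∀ l, coll v B Cc l → coll v B A l :=
    exch hq hZ (Ne.symm hCB) (Ne.symm hAB) (coll_swap23 (coll_swap12 cABC))
  -- distinctness
  have hXB : X ≠ B := by
    rintro rfl; exact hABP (coll_swap23 cAPX)
  have hXC : X ≠ Cc := by
    rintro rfl; exact hABP (exchACB P (coll_swap23 cAPX))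
  have hYA : Y ≠ A := by
    rintro rfl; exact hABP (coll_cyc (coll_cyc cBPY))
  have hYC : Y ≠ Cc := by
    rintro rfl; exact hABP (coll_swap12 (exchBCA P (coll_swap23 cBPY)))
  have hYX : Y ≠ X := by
    rintro rfl
    exact four hq hZ (Ne.symm hYP) hAB (Ne.symm hPA) (Ne.symm hYA) (Ne.symm hPB)
      (Ne.symm hYB) (coll_cyc cAPX) (coll_cyc cBPY)
  have hTA : T ≠ A := by
    rintro rfl
    exact hABP (exchACB P (coll_swap12 (coll_swap23 cCPT)))
  have hTB : T ≠ B := by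
    rintro rfl
    exact hABP (coll_swap12 (exchBCA P (coll_swap12 (coll_swap23 cCPT))))
  have hTX : T ≠ X := by
    rintro rfl
    exact four hq hZ (Ne.symm hTP) (Ne.symm hCA) (Ne.symm hPA) (Ne.symm hTA)
      (Ne.symm hPC) (Ne.symm hTC) (coll_cyc cAPX) (coll_cyc cCPT)
  have hTY : T ≠ Y := by
    rintro rfl
    exact four hq hZ (Ne.symm hTP) (Ne.symm hCB) (Ne.symm hPB) (Ne.symm hTB)
      (Ne.symm hPC) (Ne.symm hTC) (coll_cyc cBPY) (coll_cyc cCPT)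
  -- the seven points exhaust Fin 7
  have hall : ∀ z : Fin 7, z = A ∨ z = B ∨ z = Cc ∨ z = P ∨ z = X ∨ z = Y ∨ z = T := by
    have hset : ({A, B, Cc, P, X, Y, T} : Finset (Fin 7)).card = 7 := by
      rw [card_insert_of_notMem (by
            simp [hAB, Ne.symm hCA, Ne.symm hPA, Ne.symm hXA, Ne.symm hYA, Ne.symm hTA]),
          card_insert_of_notMem (by
            simp [Ne.symm hCB, Ne.symm hPB, Ne.symm hXB, Ne.symm hYB, Ne.symm hTB]),
          card_insert_of_notMem (by
            simp [Ne.symm hPC, Ne.symm hXC, Ne.symm hYC, Ne.symm hTC]),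
          card_insert_of_notMem (by
            simp [Ne.symm hXP, Ne.symm hYP, Ne.symm hTP]),
          card_insert_of_notMem (by simp [Ne.symm hYX, Ne.symm hTX]),
          card_insert_of_notMem (by simp [Ne.symm hTY]),
          card_singleton]
    have huniv : ({A, B, Cc, P, X, Y, T} : Finset (Fin 7)) = univ :=
      Finset.eq_univ_of_card _ (by rw [hset]; simp)
    intro z
    have : z ∈ ({A, B, Cc, P, X, Y, T} : Finset (Fin 7)) := by
      rw [huniv]; exact mem_univ z
    simpa using this
  -- auxiliary contradictions
  have fourAPXY : coll v A P Y → False := fun hcol =>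
    four hq hZ (Ne.symm hPA) (Ne.symm hYX) hXA hXP hYA hYP cAPX hcol
  have fourBPYX : coll v B P X → False := fun hcol =>
    four hq hZ (Ne.symm hPB) hYX hYB hYP hXB hXP cBPY hcol
  have exchAXP : ∀ l, coll v A X l → coll v A P l :=
    exch hq hZ (Ne.symm hXA) (Ne.symm hPA) (coll_swap23 cAPX)
  have exchBYP : ∀ l, coll v B Y l → coll v B P l :=
    exch hq hZ (Ne.symm hYB) (Ne.symm hPB) (coll_swap23 cBPY)
  have exchPXA : ∀ l, coll v P X l → coll v P A l :=
    exch hq hZ (Ne.symm hXP) hPA (coll_cyc cAPX)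
  have notYinAB : ¬ coll v A B Y := fun hcol => by
    rcases uAB Y hcol with h | h | h
    exacts [hYA h, hYB h, hYC h]
  have notXinAB : ¬ coll v A B X := fun hcol => by
    rcases uAB X hcol with h | h | h
    exacts [hXA h, hXB h, hXC h]
  -- the third point of the line X Y
  obtain ⟨W, hWX, hWY, cXYW, uXY⟩ := third hq hZ (Ne.symm hYX)
  have hWP : W ≠ P := by
    rintro rfl
    exact fourAPXY (coll_swap12 (exchPXA Y (coll_cyc (coll_cyc cXYW))))
  have hWA : W ≠ A := by
    rintro rfl
    exact fourAPXY (exchAXP Y (coll_cyc (coll_cyc cXYW)))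
  have hWB : W ≠ B := by
    rintro rfl
    exact fourBPYX (exchBYP X (coll_swap12 (coll_cyc cXYW)))
  -- the line through A and Y passes through T
  have cAYT : coll v A Y T := by
    obtain ⟨W1, hW1A, hW1Y, cAYW1, _⟩ := third hq hZ (Ne.symm hYA)
    rcases hall W1 with rfl | rfl | rfl | rfl | rfl | rfl | rfl
    · exact absurd rfl hW1A
    · exact absurd (coll_swap23 cAYW1) notYinAB
    · exact absurd (exchACB Y (coll_swap23 cAYW1)) notYinAB
    · exact absurd (coll_swap23 cAYW1) fourAPXY
    · exact absurd (exchAXP Y (coll_swap23 cAYW1)) fourAPXY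
    · exact absurd rfl hW1Y
    · exact cAYW1
  -- the line through B and X passes through T
  have cBXT : coll v B X T := by
    obtain ⟨W2, hW2B, hW2X, cBXW2, _⟩ := third hq hZ (Ne.symm hXB)
    rcases hall W2 with rfl | rfl | rfl | rfl | rfl | rfl | rfl
    · exact absurd (coll_cyc (coll_cyc cBXW2)) notXinAB
    · exact absurd rfl hW2B
    · exact absurd (coll_swap12 (exchBCA X (coll_swap23 cBXW2))) notXinAB
    · exact absurd (coll_swap23 cBXW2) fourBPYX
    · exact absurd rfl hW2X
    · rcases uXY B (coll_cyc cBXW2) with h | h | h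
      exacts [absurd h (Ne.symm hXB), absurd h (Ne.symm hYB), absurd h.symm hWB]
    · exact cBXW2
  -- now split on the identity of W
  rcases hall W with rfl | rfl | rfl | rfl | rfl | rfl | rfl
  · exact hWA rfl
  · exact hWB rfl
  · -- W = Cc : the Fano configuration forces characteristic 2
    have hDelta : D (v A) (v B) (v P) ≠ 0 := hABP
    obtain ⟨ca, cb, hC⟩ := LA (H2 A B hAB) cABC
    obtain ⟨xe, xf, hX⟩ := LA (H2 A P (Ne.symm hPA)) cAPX
    obtain ⟨yc, yd, hY⟩ := LA (H2 B P (Ne.symm hPB)) cBPY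
    obtain ⟨tg, th, hT⟩ := LA (H2 W P (Ne.symm hPC)) cCPT
    have hca : ca ≠ 0 := by
      rintro rfl; rw [zero_smul, zero_add] at hC
      exact H2 B W (Ne.symm hCB) (by rw [hC]; exact cr_smul_self _ _)
    have hyc : yc ≠ 0 := by
      rintro rfl; rw [zero_smul, zero_add] at hY
      exact H2 P Y (Ne.symm hYP) (by rw [hY]; exact cr_smul_self _ _)
    have hxf : xf ≠ 0 := by
      rintro rfl; rw [zero_smul, add_zero] at hX
      exact H2 A X (Ne.symm hXA) (by rw [hX]; exact cr_smul_self _ _)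
    have hcb : cb ≠ 0 := by
      rintro rfl; rw [zero_smul, add_zero] at hC
      exact H2 A W (Ne.symm hCA) (by rw [hC]; exact cr_smul_self _ _)
    have hxe : xe ≠ 0 := by
      rintro rfl; rw [zero_smul, zero_add] at hX
      exact H2 P X (Ne.symm hXP) (by rw [hX]; exact cr_smul_self _ _)
    have hyd : yd ≠ 0 := by
      rintro rfl; rw [zero_smul, add_zero] at hY
      exact H2 B Y (Ne.symm hYB) (by rw [hY]; exact cr_smul_self _ _)
    have htg : tg ≠ 0 := by
      rintro rfl; rw [zero_smul, zero_add] at hT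
      exact H2 P T (Ne.symm hTP) (by rw [hT]; exact cr_smul_self _ _)
    have hth : th ≠ 0 := by
      rintro rfl; rw [zero_smul, add_zero] at hT
      exact H2 W T (Ne.symm hTC) (by rw [hT]; exact cr_smul_self _ _)
    rw [hC] at hT
    have r1 : yc * th - yd * (tg * cb) = 0 := by
      have hcol := cAYT
      unfold coll at hcol
      rw [hY, hT, E1] at hcol
      exact (mul_eq_zero.mp hcol).resolve_right hDelta
    have r2 : xf * (tg * ca) - xe * th = 0 := by
      have hcol := cBXT
      unfold coll at hcol
      rw [hX, hT, E2] at hcol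
      exact (mul_eq_zero.mp hcol).resolve_right hDelta
    have r3 : xe * (yd * cb) + xf * (yc * ca) = 0 := by
      have hcol := cXYW
      unfold coll at hcol
      rw [hX, hY, hC, E3] at hcol
      exact neg_eq_zero.mp ((mul_eq_zero.mp hcol).resolve_right hDelta)
    have key : (yd * (cb * xe)) * tg = (xf * (ca * yc)) * tg := by
      linear_combination (-xe) * r1 - yc * r2
    have key2 : yd * (cb * xe) = xf * (ca * yc) := mul_right_cancel₀ htg key
    have h20 : (2 : F) * (xf * (ca * yc)) = 0 := by
      linear_combination r3 - key2
    have h2F : (2 : F) = 0 :=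
      (mul_eq_zero.mp h20).resolve_right
        (mul_ne_zero hxf (mul_ne_zero hca hyc))
    haveI : Fact (Nat.Prime 2) := ⟨Nat.prime_two⟩
    have hone : (2 : ℕ) • (1 : F) = 0 := by
      rw [two_smul]; linear_combination h2F
    have hord : addOrderOf (1 : F) = 2 := addOrderOf_eq_prime hone one_ne_zero
    have hdvd : (2 : ℕ) ∣ Fintype.card F := hord ▸ addOrderOf_dvd_card
    rw [Nat.odd_iff] at hodd
    omega
  · exact hWP rfl
  · exact hWX rfl
  · exact hWY rfl
  · -- W = T
    exact four hq hZ (Ne.symm hTY) hXA (Ne.symm hYX) (Ne.symm hTX) (Ne.symm hYA)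
      (Ne.symm hTA) (coll_cyc cXYW) (coll_cyc cAYT)

end NC737


open NC737 in
/-- If `q` is an odd prime power with `q > 4` (i.e., `F` is a finite field of odd
cardinality greater than `4`), then there is no 3-dimensional linear code over `F` of
length 7 all of whose nonzero codewords have Hamming weight `4`, `6`, or `7`. -/
theorem no_code_7_3_weights_467 (F : Type*) [Field F] [Fintype F] [DecidableEq F]
    (hodd : Odd (Fintype.card F)) (h4 : 4 < Fintype.card F) :
    ¬ ∃ C : Submodule F (Fin 7 → F), Module.finrank F C = 3 ∧
      ∀ c ∈ C, c ≠ 0 → hammingNorm c ∈ ({4, 6, 7} : Set ℕ) := by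
  classical
  rintro ⟨C, hrank, hwt⟩
  haveI : FiniteDimensional F C := inferInstance
  let b : Module.Basis (Fin 3) F C := Module.finBasisOfFinrankEq F C hrank
  set v : Fin 7 → Fin 3 → F := fun i j => ((b j : Fin 7 → F) i) with hv
  apply mainFano v h4 hodd
  intro m hm
  set cC : C := ∑ j, m j • b j with hcC
  have hcoe : ∀ i, (cC : Fin 7 → F) i = dp m (v i) := by
    intro i
    rw [hcC, dp_def]
    push_cast
    rw [Finset.sum_apply]
    simp only [Pi.smul_apply, smul_eq_mul, Fin.sum_univ_three]
    rfl
  have hne : (cC : Fin 7 → F) ≠ 0 := by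
    intro h0
    apply hm
    have hz : cC = 0 := by
      ext1; rw [h0]; rfl
    have hli := b.linearIndependent
    rw [Fintype.linearIndependent_iff] at hli
    funext j
    exact hli m (by rw [← hcC]; exact_mod_cast hz) j
  have hwtm := hwt (cC : Fin 7 → F) cC.2 hne
  have hsplit : (Zset v m).card + hammingNorm (cC : Fin 7 → F) = 7 := by
    have hfun : ∀ i, ((cC : Fin 7 → F) i ≠ 0) ↔ ¬ (dp m (v i) = 0) := by
      intro i; rw [hcoe i]
    unfold Zset hammingNorm
    rw [show ({i | (cC : Fin 7 → F) i ≠ 0} : Finset (Fin 7))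
        = Finset.univ.filter (fun i => ¬ (dp m (v i) = 0)) by
      apply Finset.filter_congr; intro i _; exact hfun i]
    rw [Finset.card_filter_add_card_filter_not]
    simp
  simp only [Set.mem_insert_iff, Set.mem_singleton_iff] at hwtm
  rcases hwtm with h | h | h <;> rw [h] at hsplit <;> omega
end

section
/- Let S be a multiset of 13 points in F_5^4 \ {0} such that every hyperplane through the origin (i.e., every 3-dimensional subspace) contains exactly 1, 3, or 6 points of S (counted with multiplicity). Then no 2-dimensional subspace of F_5^4 contains two or more points of S. -/
/-!
Let `P` be the plane and `a = |S ∩ P|`. Choosing a surjection `f : F₅⁴ → F₅²` with kernel `P`, the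
hyperplanes through `P` are the kernels of `ℓ ∘ f`, where `ℓ` runs over the six points of the
projective line over `F₅`. They pairwise meet in `P` and cover the space, so their point counts
`bᵢ ≥ a` add up to `13 + 5a`. If `a ≥ 2`, every `bᵢ ∈ {3, 6}`, so `3 ∣ 13 + 5a ≤ 36`, forcing
`a = 4`; but then every `bᵢ = 6` and the sum is `36 ≠ 33`.
-/

open Finset Module

variable {K V : Type*} [Field K]

variable (K) in
/-- One linear form on `K²` for each point of the projective line over `K`. -/
def projLineFunctional : Option K → Dual K (Fin 2 → K)
  | none => LinearMap.proj 1
  | some t => LinearMap.proj 0 - t • LinearMap.proj 1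

@[simp] lemma projLineFunctional_none_apply (v : Fin 2 → K) :
    projLineFunctional K none v = v 1 := rfl

@[simp] lemma projLineFunctional_some_apply (t : K) (v : Fin 2 → K) :
    projLineFunctional K (some t) v = v 0 - t * v 1 := rfl

lemma projLineFunctional_ne_zero (i : Option K) : projLineFunctional K i ≠ 0 := by
  intro h
  cases i with
  | none => simpa using LinearMap.congr_fun h ![0, 1]
  | some t => simpa using LinearMap.congr_fun h ![1, 0]

lemma existsUnique_projLineFunctional_apply_eq_zero {v : Fin 2 → K} (hv : v ≠ 0) :
    ∃! i, projLineFunctional K i v = 0 := by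
  by_cases h1 : v 1 = 0
  · have h0 : v 0 ≠ 0 := fun h0 => hv (funext fun j => by fin_cases j <;> assumption)
    refine ⟨none, h1, fun i hi => ?_⟩
    cases i with
    | none => rfl
    | some t => simp [h1, h0] at hi
  · refine ⟨some (v 0 / v 1), by simp [h1], fun i hi => ?_⟩
    cases i with
    | none => exact absurd hi h1
    | some t =>
      simp only [projLineFunctional_some_apply, sub_eq_zero] at hi
      simp [hi, h1]

open scoped Classical in
lemma card_filter_projLineFunctional_apply_eq_zero [Fintype K] (v : Fin 2 → K) :
    #{i | projLineFunctional K i v = 0} = if v = 0 then Fintype.card K + 1 else 1 := by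
  split_ifs with hv
  · simp [hv]
  · exact (Fintype.existsUnique_iff_card_one _).mp
      (existsUnique_projLineFunctional_apply_eq_zero hv)

variable [AddCommGroup V] [Module K V]

lemma exists_surjective_linearMap_ker_eq [FiniteDimensional K V] (P : Submodule K V) {n : ℕ}
    (h : finrank K P + n = finrank K V) :
    ∃ f : V →ₗ[K] Fin n → K, Function.Surjective f ∧ LinearMap.ker f = P := by
  have hQ : finrank K (V ⧸ P) = finrank K (Fin n → K) := by
    have := P.finrank_quotient_add_finrank
    rw [finrank_fin_fun]; omega
  let e := LinearEquiv.ofFinrankEq _ _ hQ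
  exact ⟨e.toLinearMap ∘ₗ P.mkQ, e.surjective.comp P.mkQ_surjective, by
    rw [LinearMap.ker_comp, LinearEquiv.ker, Submodule.comap_bot, Submodule.ker_mkQ]⟩

lemma finrank_ker_projLineFunctional_comp_add_one [FiniteDimensional K V] {f : V →ₗ[K] Fin 2 → K}
    (hf : Function.Surjective f) (i : Option K) :
    finrank K (LinearMap.ker (projLineFunctional K i ∘ₗ f)) + 1 = finrank K V := by
  refine Dual.finrank_ker_add_one_of_ne_zero fun h => projLineFunctional_ne_zero i ?_
  rwa [← LinearMap.zero_comp f, LinearMap.cancel_right hf] at h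

open scoped Classical in
lemma sum_card_filter_mem_ker_projLineFunctional_comp [Fintype K] (S : Multiset V)
    (f : V →ₗ[K] Fin 2 → K) :
    ∑ i, Multiset.card (S.filter (· ∈ LinearMap.ker (projLineFunctional K i ∘ₗ f))) =
      Multiset.card S + Fintype.card K * Multiset.card (S.filter (· ∈ LinearMap.ker f)) := by
  induction S using Multiset.induction with
  | empty => simp
  | cons x s ih =>
    have hx : ∑ i, (if x ∈ LinearMap.ker (projLineFunctional K i ∘ₗ f) then 1 else 0) =
        1 + Fintype.card K * if x ∈ LinearMap.ker f then 1 else 0 := by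
      simp only [sum_boole, Nat.cast_id, LinearMap.mem_ker, LinearMap.comp_apply,
        card_filter_projLineFunctional_apply_eq_zero]
      split_ifs <;> omega
    simp only [Multiset.filter_cons, Multiset.card_add, sum_add_distrib, apply_ite Multiset.card,
      Multiset.card_singleton, Multiset.card_zero, ih, hx, Multiset.card_cons]
    ring

lemma le_one_of_sum_eq_thirteen_add_five_mul {ι : Type*} [Fintype ι] (hι : Fintype.card ι = 6)
    {a : ℕ} {b : ι → ℕ} (hb : ∀ i, b i ∈ ({1, 3, 6} : Set ℕ)) (hab : ∀ i, a ≤ b i)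
    (hsum : ∑ i, b i = 13 + 5 * a) : a ≤ 1 := by
  by_contra! ha
  have hb36 : ∀ i, b i = 3 ∨ b i = 6 := fun i => by
    have hbi := hb i
    simp only [Set.mem_insert_iff, Set.mem_singleton_iff] at hbi
    have := hab i
    omega
  have h3 : 3 ∣ 13 + 5 * a := hsum ▸ dvd_sum fun i _ => by rcases hb36 i with h | h <;> simp [h]
  have hle : 13 + 5 * a ≤ 36 := hsum ▸ calc
    ∑ i, b i ≤ ∑ _i : ι, 6 := sum_le_sum fun i _ => by rcases hb36 i with h | h <;> omega
    _ = 36 := by simp [hι]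
  have ha4 : a = 4 := by omega
  have : ∑ i, b i = ∑ _i : ι, 6 := sum_congr rfl fun i _ => by have := hab i; have := hb36 i; omega
  simp [hι, hsum, ha4] at this

open scoped Classical in
theorem multiset_13_points_no_heavy_plane_general (S : Multiset (Fin 4 → ZMod 5))
    (hcard : Multiset.card S = 13)
    (hH : ∀ H : Submodule (ZMod 5) (Fin 4 → ZMod 5), Module.finrank (ZMod 5) H = 3 →
      Multiset.card (S.filter (· ∈ H)) ∈ ({1, 3, 6} : Set ℕ)) :
    ∀ P : Submodule (ZMod 5) (Fin 4 → ZMod 5), Module.finrank (ZMod 5) P = 2 →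
      Multiset.card (S.filter (· ∈ P)) ≤ 1 := by
  have : Fact (Nat.Prime 5) := ⟨by norm_num⟩
  intro P hP
  obtain ⟨f, hf, rfl⟩ := exists_surjective_linearMap_ker_eq P (n := 2) (by simp [hP])
  have hsum := sum_card_filter_mem_ker_projLineFunctional_comp S f
  rw [hcard, ZMod.card] at hsum
  refine le_one_of_sum_eq_thirteen_add_five_mul (by simp) (fun i => hH _ ?_)
    (fun i => Multiset.card_le_card <| Multiset.monotone_filter_right S fun x hx =>
      LinearMap.ker_le_ker_comp f _ hx) hsum
  have := finrank_ker_projLineFunctional_comp_add_one hf i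
  rw [finrank_fin_fun] at this
  omega

open scoped Classical in
/-- Let `S` be a multiset of 13 points in `F_5^4 \ {0}` such that every hyperplane
through the origin (3-dimensional subspace) contains exactly `1`, `3`, or `6` points of
`S` (with multiplicity). Then no 2-dimensional subspace of `F_5^4` contains two or more
points of `S`. -/
theorem multiset_13_points_no_heavy_plane (S : Multiset (Fin 4 → ZMod 5))
    (hcard : Multiset.card S = 13)
    (h0 : ∀ x ∈ S, x ≠ 0)
    (hH : ∀ H : Submodule (ZMod 5) (Fin 4 → ZMod 5), Module.finrank (ZMod 5) H = 3 →
      Multiset.card (S.filter (· ∈ H)) ∈ ({1, 3, 6} : Set ℕ)) :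
    ∀ P : Submodule (ZMod 5) (Fin 4 → ZMod 5), Module.finrank (ZMod 5) P = 2 →
      Multiset.card (S.filter (· ∈ P)) ≤ 1 :=
  multiset_13_points_no_heavy_plane_general S hcard hH
end

section
/- Let C be a 3-dimensional linear code over F_q (q > 4) of length 7 with generator matrix in standard form [I_3 | A], such that every nonzero codeword has weight in {4, 6, 7}. Then every row of the generator matrix has weight exactly 4, and no two rows share two common zero coordinate positions. -/
open Finset

/-- Let `G = [I₃ | A]` be a generator matrix in standard form of a 3-dimensional code of
length 7 over `F_q` with `q > 4`, all of whose nonzero codewords have weight in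
`{4, 6, 7}`. Then every row of `G` has weight exactly `4`, and no two distinct rows
share two common zero coordinate positions. -/
theorem std_gen_matrix_rows_weight_four (F : Type*) [Field F] [Fintype F] [DecidableEq F]
    (hq : 4 < Fintype.card F)
    (G : Matrix (Fin 3) (Fin 7) F)
    (hstd : ∀ i j : Fin 3, G i (Fin.castLE (by norm_num) j) = if i = j then 1 else 0)
    (hw : ∀ x : Fin 3 → F, x ≠ 0 → hammingNorm (Matrix.vecMul x G) ∈ ({4, 6, 7} : Set ℕ)) :
    (∀ i : Fin 3, hammingNorm (G i) = 4) ∧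
    (∀ i₁ i₂ : Fin 3, i₁ ≠ i₂ →
      (Finset.univ.filter (fun k : Fin 7 => G i₁ k = 0 ∧ G i₂ k = 0)).card ≤ 1) := by
  classical
  have h37 : (3:ℕ) ≤ 7 := by norm_num
  set c : Fin 3 → Fin 7 := Fin.castLE h37 with hc
  have hstd' : ∀ i j : Fin 3, G i (c j) = if i = j then 1 else 0 := hstd
  have hcinj : Function.Injective c := Fin.castLE_injective h37
  have hrow : ∀ i : Fin 3, Matrix.vecMul (Pi.single i 1) G = G i := by
    intro i; funext k
    simp [Matrix.vecMul, dotProduct, Pi.single_apply, ite_mul]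
  have hwnorm : ∀ y : Fin 7 → F, hammingNorm y = (univ.filter fun k => y k ≠ 0).card :=
    fun y => rfl
  -- Part 1
  have hW : ∀ i : Fin 3, hammingNorm (G i) = 4 := by
    intro i
    have hx : ((Pi.single i 1 : Fin 3 → F)) ≠ 0 := by
      intro h
      have := congrFun h i
      simp at this
    have hmem := hw _ hx
    rw [hrow] at hmem
    simp only [Set.mem_insert_iff, Set.mem_singleton_iff] at hmem
    obtain ⟨j₁, j₂, hj12, hj1, hj2⟩ : ∃ j₁ j₂ : Fin 3, j₁ ≠ j₂ ∧ j₁ ≠ i ∧ j₂ ≠ i := by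
      fin_cases i
      · exact ⟨1, 2, by decide, by decide, by decide⟩
      · exact ⟨0, 2, by decide, by decide, by decide⟩
      · exact ⟨0, 1, by decide, by decide, by decide⟩
    have hle : hammingNorm (G i) ≤ 5 := by
      have hsub : (univ.filter fun k => G i k ≠ 0) ⊆ univ \ {c j₁, c j₂} := by
        intro k hk
        simp only [mem_filter, mem_univ, true_and] at hk
        simp only [mem_sdiff, mem_univ, true_and, mem_insert, mem_singleton]
        push_neg
        constructor
        · rintro rfl
          exact hk (by rw [hstd' i j₁]; exact if_neg (Ne.symm hj1))
        · rintro rfl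
          exact hk (by rw [hstd' i j₂]; exact if_neg (Ne.symm hj2))
      have hcard : ((univ : Finset (Fin 7)) \ {c j₁, c j₂}).card = 5 := by
        rw [Finset.card_sdiff_of_subset (Finset.subset_univ _)]
        rw [Finset.card_insert_of_notMem (by simp [hcinj.ne hj12]), Finset.card_singleton]
        simp
      calc hammingNorm (G i) = _ := hwnorm _
        _ ≤ _ := Finset.card_le_card hsub
        _ = 5 := hcard
    rcases hmem with h|h|h <;> omega
  refine ⟨hW, ?_⟩
  intro i₁ i₂ hne
  by_contra hcon
  push_neg at hcon
  set Z := univ.filter (fun k : Fin 7 => G i₁ k = 0 ∧ G i₂ k = 0) with hZ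
  have hzero : ∀ i : Fin 3, (univ.filter fun k => G i k = 0).card = 3 := by
    intro i
    have h4 := hW i
    rw [hwnorm] at h4
    simp only [ne_eq] at h4
    have hsplit := Finset.card_filter_add_card_filter_not
      (s := (univ : Finset (Fin 7))) (p := fun k => G i k = 0)
    simp only [Finset.card_univ, Fintype.card_fin] at hsplit
    omega
  have hci₂ : c i₂ ∉ Z := by
    simp only [hZ, mem_filter, mem_univ, true_and, not_and]
    intro _
    rw [hstd' i₂ i₂, if_pos rfl]
    exact one_ne_zero
  have hci₁ : c i₁ ∉ Z := by
    simp only [hZ, mem_filter, mem_univ, true_and, not_and]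
    intro h
    rw [hstd' i₁ i₁, if_pos rfl] at h
    exact absurd h one_ne_zero
  have hZcard : Z.card ≤ 2 := by
    have hsub : insert (c i₂) Z ⊆ univ.filter fun k => G i₁ k = 0 := by
      intro k hk
      rcases Finset.mem_insert.mp hk with rfl | hk
      · simp only [mem_filter, mem_univ, true_and]
        rw [hstd' i₁ i₂]; exact if_neg hne
      · simp only [hZ, mem_filter, mem_univ, true_and] at hk ⊢
        exact hk.1
    have h3 := Finset.card_le_card hsub
    rw [Finset.card_insert_of_notMem hci₂, hzero i₁] at h3
    omega
  have hZ2 : Z.card = 2 := le_antisymm hZcard hcon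
  set T := ((univ : Finset (Fin 7)) \ (insert (c i₁) (insert (c i₂) Z))) with hT
  have hc12 : c i₁ ≠ c i₂ := hcinj.ne hne
  have hTcard : T.card = 3 := by
    rw [hT, Finset.card_sdiff_of_subset (Finset.subset_univ _)]
    rw [Finset.card_insert_of_notMem (by simp [hc12, hci₁]),
      Finset.card_insert_of_notMem hci₂, hZ2]
    simp
  have key : ∀ a : F, a ≠ 0 → ∃ k, k ∈ T ∧ a * G i₁ k + G i₂ k = 0 := by
    intro a ha
    set x : Fin 3 → F := a • (Pi.single i₁ 1 : Fin 3 → F) + (Pi.single i₂ 1 : Fin 3 → F) with hx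
    have hxne : x ≠ 0 := by
      intro h
      have h2 := congrFun h i₂
      rw [hx] at h2
      simp [Pi.single_apply, (Ne.symm hne : i₂ ≠ i₁)] at h2
    set y : Fin 7 → F := fun k => a * G i₁ k + G i₂ k with hy
    have hyeq : Matrix.vecMul x G = y := by
      rw [hx, Matrix.add_vecMul, Matrix.smul_vecMul, hrow, hrow]
      funext k
      simp [hy]
    have hmem := hw x hxne
    rw [hyeq] at hmem
    simp only [Set.mem_insert_iff, Set.mem_singleton_iff] at hmem
    have hy1 : y (c i₁) = a := by
      simp only [hy]
      rw [hstd' i₁ i₁, hstd' i₂ i₁, if_pos rfl, if_neg (Ne.symm hne)]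
      ring
    have hy2 : y (c i₂) = 1 := by
      simp only [hy]
      rw [hstd' i₁ i₂, hstd' i₂ i₂, if_neg hne, if_pos rfl]
      ring
    have hle : hammingNorm y ≤ 5 := by
      have hsub : (univ.filter fun k => y k ≠ 0) ⊆ univ \ Z := by
        intro k hk
        simp only [mem_filter, mem_univ, true_and] at hk
        simp only [mem_sdiff, mem_univ, true_and]
        intro hkZ
        simp only [hZ, mem_filter, mem_univ, true_and] at hkZ
        exact hk (by simp [hy, hkZ.1, hkZ.2])
      have hcard : ((univ : Finset (Fin 7)) \ Z).card = 5 := by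
        rw [Finset.card_sdiff_of_subset (Finset.subset_univ _), hZ2]
        simp
      calc hammingNorm y = _ := hwnorm _
        _ ≤ _ := Finset.card_le_card hsub
        _ = 5 := hcard
    have h4 : hammingNorm y = 4 := by rcases hmem with h|h|h <;> omega
    by_contra hcon2
    push_neg at hcon2
    have hsub2 : insert (c i₁) (insert (c i₂) T) ⊆ univ.filter fun k => y k ≠ 0 := by
      intro k hk
      simp only [Finset.mem_insert] at hk
      simp only [mem_filter, mem_univ, true_and]
      rcases hk with rfl | rfl | hk
      · rw [hy1]; exact ha
      · rw [hy2]; exact one_ne_zero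
      · exact hcon2 k hk
    have hge := Finset.card_le_card hsub2
    have hci₂T : c i₂ ∉ T := by simp [hT]
    have hci₁T : c i₁ ∉ insert (c i₂) T := by simp [hT, hc12]
    rw [Finset.card_insert_of_notMem hci₁T, Finset.card_insert_of_notMem hci₂T,
      hTcard] at hge
    rw [hwnorm] at h4
    omega
  have hexists : ∀ a : F, ∃ k : Fin 7, a ≠ 0 → k ∈ T ∧ a * G i₁ k + G i₂ k = 0 := by
    intro a
    by_cases ha : a = 0
    · exact ⟨0, fun h => absurd ha h⟩
    · obtain ⟨k, hk, h0⟩ := key a ha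
      exact ⟨k, fun _ => ⟨hk, h0⟩⟩
  choose f hf using hexists
  set A := ((univ : Finset F)).erase 0 with hA
  have hAcard : 4 ≤ A.card := by
    rw [hA, Finset.card_erase_of_mem (Finset.mem_univ _), Finset.card_univ]
    omega
  have hmaps : ∀ a ∈ A, f a ∈ T := fun a ha => (hf a (Finset.ne_of_mem_erase ha)).1
  obtain ⟨a, haA, a', ha'A, hne', hfa⟩ :=
    Finset.exists_ne_map_eq_of_card_lt_of_maps_to (by omega : T.card < A.card) hmaps
  have h1 := (hf a (Finset.ne_of_mem_erase haA)).2
  have h2 := (hf a' (Finset.ne_of_mem_erase ha'A)).2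
  rw [hfa] at h1
  have hu : G i₁ (f a') = 0 := by
    have hmul : (a - a') * G i₁ (f a') = 0 := by linear_combination h1 - h2
    rcases mul_eq_zero.mp hmul with h | h
    · exact absurd (sub_eq_zero.mp h) hne'
    · exact h
  have hv : G i₂ (f a') = 0 := by
    rw [hu] at h2
    simpa using h2
  have hmemZ : f a' ∈ Z := by
    simp only [hZ, mem_filter, mem_univ, true_and]
    exact ⟨hu, hv⟩
  have hmemT := hmaps a' ha'A
  rw [hT] at hmemT
  simp only [mem_sdiff, mem_univ, true_and, Finset.mem_insert] at hmemT
  exact hmemT (Or.inr (Or.inr hmemZ))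
end

section
/- Let C be a completely regular code in H(n,q) with q = p^s for a prime p. Then there exists a completely regular code in H(n(q−1)/(p−1), p) with the same intersection matrix. -/
open SimpleGraph

/-- `C` is a completely regular code of covering radius `ρ` with full (tridiagonal)
intersection matrix `M`: every vertex at distance `t` from `C` has exactly `M t s`
neighbors at distance `s` from `C`. -/
def IsCompletelyRegularWithMatrix {V : Type*} (Γ : SimpleGraph V)
    (C : Set V) (ρ : ℕ) (M : Matrix (Fin (ρ + 1)) (Fin (ρ + 1)) ℕ) : Prop :=
  C.Nonempty ∧
  (∀ v, distTo Γ C v ≤ ρ) ∧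
  (∃ v, distTo Γ C v = ρ) ∧
  ∀ v (t : Fin (ρ + 1)), distTo Γ C v = t.1 → ∀ s : Fin (ρ + 1),
    {u | Γ.Adj v u ∧ distTo Γ C u = s.1}.ncard = M t s

section Covering
variable {V V' : Type*} (Γ : SimpleGraph V) (Γ' : SimpleGraph V') (f : V' → V)

def IsGraphCovering : Prop :=
  Function.Surjective f ∧ ∀ v', Set.BijOn f (Γ'.neighborSet v') (Γ.neighborSet (f v'))

variable {Γ Γ' f}

theorem IsGraphCovering.adj (h : IsGraphCovering Γ Γ' f) {u v : V'} (huv : Γ'.Adj u v) :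
    Γ.Adj (f u) (f v) := (h.2 u).mapsTo huv

def IsGraphCovering.hom (h : IsGraphCovering Γ Γ' f) : Γ' →g Γ := ⟨f, fun a => h.adj a⟩

theorem IsGraphCovering.dist_le (h : IsGraphCovering Γ Γ' f) {u v : V'}
    (hr : Γ'.Reachable u v) : Γ.dist (f u) (f v) ≤ Γ'.dist u v := by
  obtain ⟨p, hp⟩ := hr.exists_walk_length_eq_dist
  calc Γ.dist (f u) (f v) ≤ (p.map h.hom).length := SimpleGraph.dist_le _
  _ = Γ'.dist u v := by rw [SimpleGraph.Walk.length_map, hp]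

private theorem IsGraphCovering.lift_aux (h : IsGraphCovering Γ Γ' f) {a c : V}
    (w : Γ.Walk a c) : ∀ v', f v' = a →
    ∃ c', f c' = c ∧ ∃ w' : Γ'.Walk v' c', w'.length = w.length := by
  induction w with
  | nil => exact fun v' hv => ⟨v', hv, SimpleGraph.Walk.nil, rfl⟩
  | @cons a b c hadj w ih =>
    intro v' hv
    obtain ⟨b', hb'mem, hb'⟩ := (h.2 v').surjOn (show b ∈ Γ.neighborSet (f v') by rw [hv]; exact hadj)
    obtain ⟨c', hc', w', hw'⟩ := ih b' hb'
    exact ⟨c', hc', SimpleGraph.Walk.cons hb'mem w', by exact congrArg (· + 1) hw'⟩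

theorem sInf_eq_of_forall {A B : Set ℕ} (h1 : ∀ a ∈ A, ∃ b ∈ B, b ≤ a)
    (h2 : ∀ b ∈ B, ∃ a ∈ A, a ≤ b) : sInf A = sInf B := by
  rcases A.eq_empty_or_nonempty with rfl | hA
  · rcases B.eq_empty_or_nonempty with rfl | hB
    · rfl
    · obtain ⟨b, hb⟩ := hB; obtain ⟨a, ha, _⟩ := h2 b hb; exact absurd ha (Set.notMem_empty a)
  · obtain ⟨a, ha⟩ := hA
    have hB : B.Nonempty := by obtain ⟨b, hb, _⟩ := h1 a ha; exact ⟨b, hb⟩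
    apply le_antisymm
    · obtain ⟨a0, ha0, h0⟩ := h2 (sInf B) (Nat.sInf_mem hB)
      exact le_trans (Nat.sInf_le ha0) h0
    · obtain ⟨b0, hb0, h0⟩ := h1 (sInf A) (Nat.sInf_mem ⟨a, ha⟩)
      exact le_trans (Nat.sInf_le hb0) h0

theorem IsGraphCovering.distTo_eq (h : IsGraphCovering Γ Γ' f) (hΓ : Γ.Preconnected)
    (hΓ' : Γ'.Preconnected) (C : Set V) (v' : V') :
    distTo Γ' (f ⁻¹' C) v' = distTo Γ C (f v') := by
  apply sInf_eq_of_forall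
  · rintro a ⟨c', hc', rfl⟩
    exact ⟨Γ.dist (f v') (f c'), ⟨f c', hc', rfl⟩, h.dist_le (hΓ' v' c')⟩
  · rintro b ⟨c, hc, rfl⟩
    obtain ⟨w, hw⟩ := (hΓ (f v') c).exists_walk_length_eq_dist
    obtain ⟨c', hc'f, w', hw'⟩ := h.lift_aux w v' rfl
    refine ⟨Γ'.dist v' c', ⟨c', by simp [Set.mem_preimage, hc'f, hc], rfl⟩, ?_⟩
    calc Γ'.dist v' c' ≤ w'.length := SimpleGraph.dist_le _
    _ = Γ.dist (f v') c := by rw [hw', hw]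

theorem IsGraphCovering.ncard_eq (h : IsGraphCovering Γ Γ' f) (hΓ : Γ.Preconnected)
    (hΓ' : Γ'.Preconnected) (C : Set V) (v' : V') (s : ℕ) :
    {u | Γ'.Adj v' u ∧ distTo Γ' (f ⁻¹' C) u = s}.ncard
      = {w | Γ.Adj (f v') w ∧ distTo Γ C w = s}.ncard := by
  have hbij : Set.BijOn f {u | Γ'.Adj v' u ∧ distTo Γ' (f ⁻¹' C) u = s}
      {w | Γ.Adj (f v') w ∧ distTo Γ C w = s} := by
    refine ⟨fun u ⟨h1, h2⟩ => ⟨h.adj h1, by rw [← h.distTo_eq hΓ hΓ' C]; exact h2⟩,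
      (h.2 v').injOn.mono (fun u hu => hu.1), ?_⟩
    rintro w ⟨h1, h2⟩
    obtain ⟨u, hu, rfl⟩ := (h.2 v').surjOn (show w ∈ Γ.neighborSet (f v') from h1)
    exact ⟨u, ⟨hu, by rw [h.distTo_eq hΓ hΓ' C]; exact h2⟩, rfl⟩
  rw [← hbij.image_eq, Set.ncard_image_of_injOn hbij.injOn]
end Covering

theorem hammingGraph_adj_iff {n : ℕ} {α : Type*} [DecidableEq α] {x y : Fin n → α} :
    (hammingGraph n α).Adj x y ↔ ∃ a b, b ≠ x a ∧ y = Function.update x a b := by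
  show hammingDist x y = 1 ↔ _
  rw [hammingDist, Finset.card_eq_one]
  constructor
  · rintro ⟨a, ha⟩
    refine ⟨a, y a, ?_, ?_⟩
    · have : a ∈ ({a} : Finset (Fin n)) := Finset.mem_singleton_self a
      rw [← ha, Finset.mem_filter] at this
      exact fun h => this.2 h.symm
    · funext i
      rcases eq_or_ne i a with rfl | hi
      · simp
      · rw [Function.update_of_ne hi]
        by_contra hxy
        have : i ∈ ({a} : Finset (Fin n)) := by
          rw [← ha, Finset.mem_filter]; exact ⟨Finset.mem_univ _, fun h => hxy h.symm⟩
        exact hi (Finset.mem_singleton.mp this)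
  · rintro ⟨a, b, hb, rfl⟩
    refine ⟨a, ?_⟩
    ext i
    simp only [Finset.mem_filter, Finset.mem_univ, true_and, Finset.mem_singleton]
    rcases eq_or_ne i a with rfl | hi
    · simpa using fun h => hb h.symm
    · simp [Function.update_of_ne hi, hi]

theorem hammingGraph_adj_update {n : ℕ} {α : Type*} [DecidableEq α] {x : Fin n → α}
    {a : Fin n} {b : α} (hb : b ≠ x a) : (hammingGraph n α).Adj x (Function.update x a b) :=
  hammingGraph_adj_iff.mpr ⟨a, b, hb, rfl⟩

theorem hammingGraph_preconnected (n : ℕ) (α : Type*) [DecidableEq α] :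
    (hammingGraph n α).Preconnected := by
  intro x y
  have key : ∀ d (x y : Fin n → α), hammingDist x y = d → (hammingGraph n α).Reachable x y := by
    intro d
    induction d with
    | zero => intro x y h; rw [hammingDist_eq_zero] at h; exact h ▸ Reachable.refl x
    | succ d ih =>
      intro x y h
      have hne : ∃ a, x a ≠ y a := by
        by_contra hc
        push_neg at hc
        have : x = y := funext hc
        simp [this, hammingDist_self] at h
      obtain ⟨a, ha⟩ := hne
      set x' := Function.update x a (y a) with hx'
      have hadj : (hammingGraph n α).Adj x x' := hammingGraph_adj_update (Ne.symm ha)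
      have hd : hammingDist x' y = d := by
        have : (Finset.univ.filter fun i => x' i ≠ y i)
            = (Finset.univ.filter fun i => x i ≠ y i).erase a := by
          ext i
          simp only [Finset.mem_filter, Finset.mem_univ, true_and, Finset.mem_erase, hx']
          rcases eq_or_ne i a with rfl | hi
          · simp
          · simp [Function.update_of_ne hi, hi]
        have h2 : hammingDist x' y = ((Finset.univ.filter fun i => x i ≠ y i).erase a).card := by
          rw [hammingDist, this]
        rw [h2, Finset.card_erase_of_mem (by simp [ha]), hammingDist] at *
        omega
      exact (hadj.reachable).trans (ih x' y hd)
  exact key _ x y rfl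

section Construction
variable (p s : ℕ) [Fact p.Prime]

noncomputable instance : Fintype (Projectivization (ZMod p) (Fin s → ZMod p)) :=
  @Fintype.ofFinite _ (Finite.of_surjective
    (fun v : {x : Fin s → ZMod p // x ≠ 0} => Projectivization.mk (ZMod p) v.1 v.2)
    (fun ℓ => ⟨⟨ℓ.rep, ℓ.rep_nonzero⟩, ℓ.mk_rep⟩))

/-- The scaled representatives map, a bijection from (line, scalar) pairs to nonzero vectors. -/
noncomputable def scaledRep (x : Projectivization (ZMod p) (Fin s → ZMod p) × (ZMod p)ˣ) :
    {v : Fin s → ZMod p // v ≠ 0} :=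
  ⟨(x.2 : ZMod p) • x.1.rep, smul_ne_zero x.2.ne_zero x.1.rep_nonzero⟩

theorem scaledRep_bijective : Function.Bijective (scaledRep p s) := by
  constructor
  · rintro ⟨ℓ1, c1⟩ ⟨ℓ2, c2⟩ h
    have h' : (c1 : ZMod p) • ℓ1.rep = (c2 : ZMod p) • ℓ2.rep := congrArg Subtype.val h
    have hℓ : ℓ1 = ℓ2 := by
      have e1 : Projectivization.mk (ZMod p) ((c1 : ZMod p) • ℓ1.rep)
          (smul_ne_zero c1.ne_zero ℓ1.rep_nonzero) = ℓ1 := by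
        rw [show Projectivization.mk (ZMod p) ((c1 : ZMod p) • ℓ1.rep) _
            = Projectivization.mk (ZMod p) ℓ1.rep ℓ1.rep_nonzero from
          (Projectivization.mk_eq_mk_iff _ _ _ _ _).mpr ⟨c1, rfl⟩, Projectivization.mk_rep]
      have e2 : Projectivization.mk (ZMod p) ((c2 : ZMod p) • ℓ2.rep)
          (smul_ne_zero c2.ne_zero ℓ2.rep_nonzero) = ℓ2 := by
        rw [show Projectivization.mk (ZMod p) ((c2 : ZMod p) • ℓ2.rep) _
            = Projectivization.mk (ZMod p) ℓ2.rep ℓ2.rep_nonzero from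
          (Projectivization.mk_eq_mk_iff _ _ _ _ _).mpr ⟨c2, rfl⟩, Projectivization.mk_rep]
      rw [← e1, ← e2]
      congr 1
    subst hℓ
    have hc : (c1 : ZMod p) = c2 := smul_left_injective (ZMod p) ℓ1.rep_nonzero h'
    exact Prod.ext rfl (Units.ext hc)
  · rintro ⟨v, hv⟩
    obtain ⟨a, ha⟩ := (Projectivization.mk_eq_mk_iff (ZMod p) v _ hv
      (Projectivization.mk (ZMod p) v hv).rep_nonzero).mp (Projectivization.mk_rep _).symm
    exact ⟨⟨Projectivization.mk (ZMod p) v hv, a⟩, Subtype.ext ha⟩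
end Construction

theorem sum_smul_update {s p k : ℕ} [Fact p.Prime] (eP : Fin p → ZMod p)
    (r : Fin k → (Fin s → ZMod p)) (t : Fin k → Fin p) (i0 : Fin k) (b : Fin p) :
    ∑ i, eP (Function.update t i0 b i) • r i
      = (∑ i, eP (t i) • r i) + (eP b - eP (t i0)) • r i0 := by
  have hfun : (fun i => eP (Function.update t i0 b i) • r i)
      = Function.update (fun i => eP (t i) • r i) i0 (eP b • r i0) := by
    funext i
    rcases eq_or_ne i i0 with rfl | hi
    · simp
    · simp [Function.update_of_ne hi]
  rw [hfun, Finset.sum_update_of_mem (Finset.mem_univ i0)]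
  rw [← Finset.add_sum_erase _ _ (Finset.mem_univ i0), sub_smul,
    Finset.sdiff_singleton_eq_erase]
  abel

theorem exists_hamming_covering (p s n q : ℕ) (hp : p.Prime) (hs : 1 ≤ s) (hq : q = p ^ s) :
    ∃ f : (Fin (n * (q - 1) / (p - 1)) → Fin p) → (Fin n → Fin q),
      IsGraphCovering (hammingGraph n (Fin q)) (hammingGraph (n * (q - 1) / (p - 1)) (Fin p)) f := by
  haveI : Fact p.Prime := ⟨hp⟩
  haveI : NeZero p := ⟨hp.ne_zero⟩
  set k := Fintype.card (Projectivization (ZMod p) (Fin s → ZMod p)) with hk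
  have hcardV : Fintype.card (Fin s → ZMod p) = q := by
    rw [Fintype.card_fun, ZMod.card, Fintype.card_fin, hq]
  have hcard_ne : Fintype.card {v : Fin s → ZMod p // v ≠ 0} = q - 1 := by
    rw [Fintype.card_subtype_compl, hcardV, Fintype.card_unique]
  have hkp : k * (p - 1) = q - 1 := by
    have := Fintype.card_of_bijective (scaledRep_bijective p s)
    rwa [Fintype.card_prod, ZMod.card_units, hcard_ne] at this
  have hm : n * (q - 1) / (p - 1) = n * k := by
    have hp1 : 0 < p - 1 := by have := hp.two_le; omega
    rw [← hkp, ← mul_assoc, Nat.mul_div_cancel _ hp1]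
  set m := n * (q - 1) / (p - 1) with hmdef
  let eI : Fin m ≃ Fin n × Fin k := (finCongr hm).trans finProdFinEquiv.symm
  let eP : Fin p ≃ ZMod p := (Fintype.equivFinOfCardEq (ZMod.card p)).symm
  let eQ : (Fin s → ZMod p) ≃ Fin q := Fintype.equivFinOfCardEq hcardV
  let eL : Fin k ≃ Projectivization (ZMod p) (Fin s → ZMod p) := (Fintype.equivFin _).symm
  set r : Fin k → (Fin s → ZMod p) := fun i => (eL i).rep with hrdef
  have hr : ∀ i, r i ≠ 0 := fun i => (eL i).rep_nonzero
  have hinj : ∀ (i1 i2 : Fin k) (δ1 δ2 : ZMod p), δ1 ≠ 0 → δ2 ≠ 0 →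
      δ1 • r i1 = δ2 • r i2 → i1 = i2 ∧ δ1 = δ2 := by
    intro i1 i2 δ1 δ2 h1 h2 heq
    have := (scaledRep_bijective p s).injective
      (a₁ := (eL i1, Units.mk0 δ1 h1)) (a₂ := (eL i2, Units.mk0 δ2 h2))
      (Subtype.ext (by simpa [scaledRep] using heq))
    obtain ⟨hℓ, hc⟩ := Prod.mk.inj this
    exact ⟨eL.injective hℓ, congrArg Units.val hc⟩
  have hsurj : ∀ d : Fin s → ZMod p, d ≠ 0 → ∃ i, ∃ δ : ZMod p, δ ≠ 0 ∧ δ • r i = d := by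
    intro d hd
    obtain ⟨⟨ℓ, c⟩, hc⟩ := (scaledRep_bijective p s).surjective ⟨d, hd⟩
    refine ⟨eL.symm ℓ, (c : ZMod p), c.ne_zero, ?_⟩
    have : (c : ZMod p) • ℓ.rep = d := congrArg Subtype.val hc
    simpa [hrdef] using this
  set B : (Fin m → Fin p) → Fin n → (Fin s → ZMod p) :=
    fun x j => ∑ i, eP (x (eI.symm (j, i))) • r i with hB
  set f : (Fin m → Fin p) → (Fin n → Fin q) := fun x j => eQ (B x j) with hf
  have hIa : ∀ a : Fin m, eI.symm ((eI a).1, (eI a).2) = a := by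
    intro a; rw [Prod.mk.eta, Equiv.symm_apply_apply]
  have hBupd : ∀ (x : Fin m → Fin p) (a : Fin m) (b : Fin p),
      B (Function.update x a b)
        = Function.update (B x) (eI a).1
            (B x (eI a).1 + (eP b - eP (x a)) • r (eI a).2) := by
    intro x a b
    funext j'
    rcases eq_or_ne j' (eI a).1 with rfl | hj
    · rw [Function.update_self]
      have hxcomp : ∀ i, Function.update x a b (eI.symm ((eI a).1, i))
          = Function.update (fun i => x (eI.symm ((eI a).1, i))) (eI a).2 b i := by
        intro i
        rcases eq_or_ne i (eI a).2 with rfl | hi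
        · rw [Function.update_self, hIa, Function.update_self]
        · rw [Function.update_of_ne hi, Function.update_of_ne]
          intro hcon
          apply hi
          have := congrArg (fun z => (eI z).2) hcon
          simpa using this
      show (∑ i, eP ((Function.update x a b) (eI.symm ((eI a).1, i))) • r i) = _
      calc (∑ i, eP ((Function.update x a b) (eI.symm ((eI a).1, i))) • r i)
          = ∑ i, eP ((Function.update (fun i => x (eI.symm ((eI a).1, i))) (eI a).2 b) i) • r i :=
            Finset.sum_congr rfl (fun i _ => by rw [hxcomp i])
        _ = (∑ i, eP (x (eI.symm ((eI a).1, i))) • r i)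
              + (eP b - eP (x (eI.symm ((eI a).1, (eI a).2)))) • r (eI a).2 :=
            sum_smul_update _ _ _ _ _
        _ = B x (eI a).1 + (eP b - eP (x a)) • r (eI a).2 := by rw [hIa, hB]
    · rw [Function.update_of_ne hj]
      show (∑ i, eP ((Function.update x a b) (eI.symm (j', i))) • r i) = B x j'
      rw [hB]
      refine Finset.sum_congr rfl (fun i _ => ?_)
      rw [Function.update_of_ne]
      intro hcon
      apply hj
      have := congrArg (fun z => (eI z).1) hcon
      simpa using this
  have hadj_ne : ∀ (x : Fin m → Fin p) (a : Fin m) (b : Fin p), b ≠ x a →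
      B x (eI a).1 + (eP b - eP (x a)) • r (eI a).2 ≠ B x (eI a).1 := by
    intro x a b hb hcon
    have hδ : eP b - eP (x a) ≠ 0 := sub_ne_zero.mpr (fun h => hb (eP.injective h))
    exact smul_ne_zero hδ (hr (eI a).2) (add_eq_left.mp hcon)
  have hfupd : ∀ (v : Fin m → Fin p) (a : Fin m) (b : Fin p),
      f (Function.update v a b) = Function.update (f v) (eI a).1
        (eQ (B v (eI a).1 + (eP b - eP (v a)) • r (eI a).2)) := by
    intro v a b
    funext j
    show eQ (B (Function.update v a b) j) = _
    rw [hBupd v a b]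
    rcases eq_or_ne j (eI a).1 with rfl | hj
    · rw [Function.update_self, Function.update_self]
    · rw [Function.update_of_ne hj, Function.update_of_ne hj]
  have hmaps : ∀ v u, (hammingGraph m (Fin p)).Adj v u →
      (hammingGraph n (Fin q)).Adj (f v) (f u) := by
    intro v u huv
    obtain ⟨a, b, hb, rfl⟩ := hammingGraph_adj_iff.mp huv
    refine hammingGraph_adj_iff.mpr ⟨(eI a).1,
      eQ (B v (eI a).1 + (eP b - eP (v a)) • r (eI a).2), ?_, hfupd v a b⟩
    intro hcon
    exact hadj_ne v a b hb (eQ.injective hcon)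
  have hfv : ∀ (x : Fin m → Fin p) (j : Fin n), f x j = eQ (B x j) := fun x j => rfl
  have hinjOn : ∀ v : Fin m → Fin p,
      Set.InjOn f ((hammingGraph m (Fin p)).neighborSet v) := by
    intro v u1 hu1 u2 hu2 hfeq
    obtain ⟨a1, b1, hb1, rfl⟩ := hammingGraph_adj_iff.mp hu1
    obtain ⟨a2, b2, hb2, rfl⟩ := hammingGraph_adj_iff.mp hu2
    rw [hfupd, hfupd] at hfeq
    have hδ1 : eP b1 - eP (v a1) ≠ 0 := sub_ne_zero.mpr (fun h => hb1 (eP.injective h))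
    have hδ2 : eP b2 - eP (v a2) ≠ 0 := sub_ne_zero.mpr (fun h => hb2 (eP.injective h))
    have hj12 : (eI a1).1 = (eI a2).1 := by
      by_contra hne
      have h1 := congrFun hfeq (eI a1).1
      rw [Function.update_self, Function.update_of_ne hne, hfv] at h1
      exact hadj_ne v a1 b1 hb1 (eQ.injective h1)
    have h1 := congrFun hfeq (eI a1).1
    rw [Function.update_self, hj12, Function.update_self] at h1
    have h3 := add_left_cancel (eQ.injective h1)
    obtain ⟨hi, hδeq⟩ := hinj _ _ _ _ hδ1 hδ2 h3
    have ha : a1 = a2 := eI.injective (Prod.ext hj12 hi)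
    subst ha
    have hbeq : b1 = b2 := eP.injective (sub_left_inj.mp hδeq)
    rw [hbeq]
  have hsurjOn : ∀ v : Fin m → Fin p,
      Set.SurjOn f ((hammingGraph m (Fin p)).neighborSet v)
        ((hammingGraph n (Fin q)).neighborSet (f v)) := by
    intro v w hw
    obtain ⟨j, c, hc, rfl⟩ := hammingGraph_adj_iff.mp hw
    have hcfv : c ≠ eQ (B v j) := by rw [← hfv]; exact hc
    have hd : eQ.symm c - B v j ≠ 0 := by
      refine sub_ne_zero.mpr (fun h => hcfv ?_)
      rw [← h, Equiv.apply_symm_apply]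
    obtain ⟨i, δ, hδ, hδr⟩ := hsurj _ hd
    set a := eI.symm (j, i) with hadef
    have haI : eI a = (j, i) := eI.apply_symm_apply (j, i)
    set b := eP.symm (δ + eP (v a)) with hbdef
    have hePb : eP b = δ + eP (v a) := eP.apply_symm_apply _
    have hbne : b ≠ v a := by
      intro h
      apply hδ
      have : eP (v a) = δ + eP (v a) := by rw [← hePb, h]
      exact right_eq_add.mp this
    refine ⟨Function.update v a b, ?_, ?_⟩
    · exact hammingGraph_adj_iff.mpr ⟨a, b, hbne, rfl⟩
    · rw [hfupd, haI]
      have hval : B v j + (eP b - eP (v a)) • r i = eQ.symm c := by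
        rw [hePb, add_sub_cancel_right, hδr]
        abel
      rw [hval, Equiv.apply_symm_apply]
  have hblock : ∀ z : Fin s → ZMod p, ∃ t : Fin k → Fin p, (∑ i, eP (t i) • r i) = z := by
    intro z
    rcases eq_or_ne z 0 with rfl | hz
    · exact ⟨fun _ => eP.symm 0,
        by simp only [Equiv.apply_symm_apply, zero_smul, Finset.sum_const_zero]⟩
    · obtain ⟨i, δ, hδ, hδr⟩ := hsurj z hz
      refine ⟨Function.update (fun _ => eP.symm 0) i (eP.symm δ), ?_⟩
      rw [sum_smul_update]
      simp only [Equiv.apply_symm_apply, zero_smul, Finset.sum_const_zero, sub_zero, zero_add]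
      exact hδr
  have hfsurj : Function.Surjective f := by
    intro y
    choose t ht using fun j => hblock (eQ.symm (y j))
    refine ⟨fun a => t (eI a).1 (eI a).2, ?_⟩
    funext j
    have hBval : B (fun a => t (eI a).1 (eI a).2) j = eQ.symm (y j) := by
      rw [hB]
      simp only [Equiv.apply_symm_apply]
      exact ht j
    show eQ (B (fun a => t (eI a).1 (eI a).2) j) = y j
    rw [hBval, Equiv.apply_symm_apply]
  refine ⟨f, hfsurj, fun v => ⟨fun u hu => hmaps v u hu, hinjOn v, hsurjOn v⟩⟩


theorem IsGraphCovering.transfer {V V' : Type*} {Γ : SimpleGraph V} {Γ' : SimpleGraph V'}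
    {f : V' → V} (h : IsGraphCovering Γ Γ' f) (hΓ : Γ.Preconnected) (hΓ' : Γ'.Preconnected)
    {C : Set V} {ρ : ℕ} {M : Matrix (Fin (ρ + 1)) (Fin (ρ + 1)) ℕ}
    (hC : IsCompletelyRegularWithMatrix Γ C ρ M) :
    IsCompletelyRegularWithMatrix Γ' (f ⁻¹' C) ρ M := by
  obtain ⟨hne, hle, ⟨v0, hv0⟩, hcount⟩ := hC
  refine ⟨?_, ?_, ?_, ?_⟩
  · obtain ⟨c, hc⟩ := hne
    obtain ⟨c', rfl⟩ := h.1 c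
    exact ⟨c', hc⟩
  · intro v'
    rw [h.distTo_eq hΓ hΓ' C]
    exact hle _
  · obtain ⟨v0', rfl⟩ := h.1 v0
    exact ⟨v0', by rw [h.distTo_eq hΓ hΓ' C]; exact hv0⟩
  · intro v' t ht s'
    rw [h.ncard_eq hΓ hΓ' C]
    exact hcount (f v') t (by rw [← h.distTo_eq hΓ hΓ' C]; exact ht) s'

/-- If `C` is a completely regular code in `H(n,q)` with `q = p^s` for a prime `p`, then
there exists a completely regular code in `H(n(q-1)/(p-1), p)` with the same
intersection matrix. -/
theorem crc_descend_to_prime_alphabet (p s n q : ℕ) (hp : p.Prime) (hs : 1 ≤ s)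
    (hq : q = p ^ s)
    (C : Set (Fin n → Fin q)) (ρ : ℕ) (M : Matrix (Fin (ρ + 1)) (Fin (ρ + 1)) ℕ)
    (hC : IsCompletelyRegularWithMatrix (hammingGraph n (Fin q)) C ρ M) :
    ∃ C' : Set (Fin (n * (q - 1) / (p - 1)) → Fin p),
      IsCompletelyRegularWithMatrix
        (hammingGraph (n * (q - 1) / (p - 1)) (Fin p)) C' ρ M := by
  obtain ⟨f, hf⟩ := exists_hamming_covering p s n q hp hs hq
  exact ⟨f ⁻¹' C, hf.transfer (hammingGraph_preconnected _ _)
    (hammingGraph_preconnected _ _) hC⟩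
end
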